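/- arXiv:2202.01331 — 7 statements merged into one kernel-verified Lean document; each statement's English description precedes it below -/
import Mathlib

section
/- Let K = {w : X~ w >= 0} be a polyhedral cone given by rows x~_1,...,x~_m, let S be the affine hull of K, and suppose K is singular, i.e. S is a proper subspace of R^d. If I is a minimal index set for S (meaning K_I = {w : X~_I w >= 0} is contained in S but removing any single index from I breaks the containment), then every row x~_i with i in I is orthogonal to S. -/
open Matrix

/-- If `K = {w : X̃ w ≥ 0}` is a singular polyhedral cone whose affine hull is the proper
subspace `S`, and `I` is a minimal index set for `S`, then every row `x̃ᵢ`, `i ∈ I`, is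
orthogonal to `S`. -/
theorem minimal_index_set_orthogonal {m d : ℕ} (Xt : Matrix (Fin m) (Fin d) ℝ)
    (K : Set (Fin d → ℝ)) (hK : K = {w | ∀ i, 0 ≤ Xt i ⬝ᵥ w})
    (S : Submodule ℝ (Fin d → ℝ))
    (hS : (affineSpan ℝ K : Set (Fin d → ℝ)) = (S : Set (Fin d → ℝ)))
    (hProper : S ≠ ⊤)
    (I : Finset (Fin m))
    (hmin1 : {w : Fin d → ℝ | ∀ i ∈ I, 0 ≤ Xt i ⬝ᵥ w} ⊆ (S : Set (Fin d → ℝ)))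
    (hmin2 : ∀ j ∈ I,
      ¬ ({w : Fin d → ℝ | ∀ i ∈ I.erase j, 0 ≤ Xt i ⬝ᵥ w} ⊆ (S : Set (Fin d → ℝ)))) :
    ∀ i ∈ I, ∀ s ∈ S, Xt i ⬝ᵥ s = 0 := by
  intro j hj s hs
  obtain ⟨w, hw1, hw2⟩ : ∃ w, (∀ i ∈ I.erase j, 0 ≤ Xt i ⬝ᵥ w) ∧ w ∉ (S : Set (Fin d → ℝ)) := by
    have h := hmin2 j hj
    rw [Set.not_subset] at h
    obtain ⟨w, hw, hw'⟩ := h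
    exact ⟨w, hw, hw'⟩
  have hwj : Xt j ⬝ᵥ w < 0 := by
    by_contra h
    push_neg at h
    apply hw2
    apply hmin1
    intro i hi
    rcases eq_or_ne i j with rfl | hne
    · exact h
    · exact hw1 i (Finset.mem_erase.mpr ⟨hne, hi⟩)
  have hKS : K ⊆ (S : Set (Fin d → ℝ)) := by
    intro v hv
    rw [← hS]
    exact subset_affineSpan ℝ K hv
  have hvanish : ∀ v ∈ K, Xt j ⬝ᵥ v = 0 := by
    intro v hv
    have hvI : ∀ i ∈ I, 0 ≤ Xt i ⬝ᵥ v := by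
      rw [hK] at hv
      intro i _
      exact hv i
    have ha : 0 ≤ Xt j ⬝ᵥ v := hvI j hj
    rcases ha.eq_or_lt with h | h
    · exact h.symm
    exfalso
    set a := Xt j ⬝ᵥ v with ha_def
    set c := -(Xt j ⬝ᵥ w) with hc_def
    have hc : 0 < c := by simp [hc_def]; linarith
    have hu : v + (a / c) • w ∈ {w : Fin d → ℝ | ∀ i ∈ I, 0 ≤ Xt i ⬝ᵥ w} := by
      intro i hi
      rw [dotProduct_add, dotProduct_smul]
      rcases eq_or_ne i j with rfl | hne
      · have hcw : Xt i ⬝ᵥ w = -c := by simp [hc_def]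
        rw [hcw, smul_eq_mul]
        have : a / c * -c = -a := by field_simp
        rw [this]
        simp [ha_def]
      · have h1 := hw1 i (Finset.mem_erase.mpr ⟨hne, hi⟩)
        have h2 : 0 ≤ a / c * (Xt i ⬝ᵥ w) :=
          mul_nonneg (div_nonneg h.le hc.le) h1
        have h3 := hvI i hi
        rw [smul_eq_mul]
        exact add_nonneg h3 h2
    have huS := hmin1 hu
    have hvS : v ∈ S := hKS hv
    apply hw2
    have hw_eq : w = (c / a) • ((v + (a / c) • w) - v) := by
      have : (v + (a / c) • w) - v = (a / c) • w := by abel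
      rw [this, smul_smul]
      have : c / a * (a / c) = 1 := by field_simp
      rw [this, one_smul]
    rw [hw_eq]
    exact S.smul_mem _ (S.sub_mem huS hvS)
  have hsK : s ∈ Submodule.span ℝ K := by
    have h1 : s ∈ (affineSpan ℝ K : Set (Fin d → ℝ)) := by rw [hS]; exact hs
    have h2 : affineSpan ℝ K ≤ (Submodule.span ℝ K).toAffineSubspace :=
      affineSpan_le.mpr Submodule.subset_span
    exact h2 h1
  refine Submodule.span_induction (p := fun x _ => Xt j ⬝ᵥ x = 0)
    (fun x hx => hvanish x hx) (by simp) ?_ ?_ hsK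
  · intro x y _ _ hx hy
    rw [dotProduct_add, hx, hy, add_zero]
  · intro r x _ hx
    rw [dotProduct_smul, hx, smul_zero]
end

section
/- Every singular cone among the hyperplane-arrangement cones is contained in a non-singular one: if K_i = {w : (2D_i - I) X w >= 0} satisfies K_i - K_i ≠ R^d for some activation pattern D_i in D_X, then there exists another pattern D_j in D_X with K_j - K_j = R^d and K_i a proper subset of K_j. -/
/-!
Summing, over the rows, points of `K_i` that are strict on that row gives `w ∈ K_i` strict on
every row that does not vanish identically on `K_i`. As `K_i` is singular, some nonzero row `k₀`
vanishes on `K_i`. For `z` off every hyperplane of the arrangement and `t` large,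
`u = t • w + z` keeps the strict signs of `w` and lies on no hyperplane, so its pattern `D_j`
has a full-dimensional cone. Off the rows vanishing on `K_i` the signs of `D_i` and `D_j` agree,
hence `K_i ⊆ K_j`; and `u ∈ K_j \ K_i` because `(X u)_{k₀} ≠ 0`.
-/

open Filter Set
open scoped Pointwise

variable {𝕜 V ι : Type*} [Field 𝕜] [LinearOrder 𝕜] [IsStrictOrderedRing 𝕜]
  [AddCommGroup V] [Module 𝕜 V]

lemma eventually_forall_pos_mul_add [Finite ι] (c b : ι → 𝕜) :
    ∀ᶠ t in atTop, ∀ k, 0 < c k → 0 < t * c k + b k := by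
  refine eventually_all.2 fun k => ?_
  by_cases hk : 0 < c k
  · have : Tendsto (fun t => t * c k + b k) atTop atTop :=
      tendsto_atTop_add_const_right _ _ (tendsto_id.atTop_mul_const hk)
    exact (this.eventually_gt_atTop 0).mono fun _ h _ => h
  · exact Eventually.of_forall fun _ h => absurd h hk

def signCone (f : ι → Module.Dual 𝕜 V) (s : ι → 𝕜) : PointedCone 𝕜 V where
  carrier := {w | ∀ k, 0 ≤ s k * f k w}
  add_mem' {v w} hv hw k := by simpa [mul_add] using add_nonneg (hv k) (hw k)
  zero_mem' k := by simp
  smul_mem' c w hw k := by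
    simpa [← Nonneg.coe_smul, mul_left_comm] using mul_nonneg c.2 (hw k)

section signCone

variable {f : ι → Module.Dual 𝕜 V} {s : ι → 𝕜}

lemma signCone_sub_self_eq_univ [Finite ι] {u : V}
    (hu : ∀ k, f k ≠ 0 → 0 < s k * f k u) :
    (signCone f s : Set V) - (signCone f s : Set V) = univ := by
  have hmem (x : V) (hx : ∀ k, f k ≠ 0 → 0 ≤ s k * f k x) : x ∈ signCone f s :=
    fun k => by
      by_cases hk : f k = 0
      · simp [hk]
      · exact hx k hk
  refine eq_univ_of_forall fun x => ?_
  obtain ⟨t, ht₀, ht⟩ := ((eventually_ge_atTop 0).and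
    (eventually_forall_pos_mul_add (fun k => s k * f k u) (fun k => s k * f k x))).exists
  have hu_mem : u ∈ signCone f s := hmem u fun k hk => (hu k hk).le
  refine ⟨t • u + x, hmem _ fun k hk => ?_, t • u, (signCone f s).smul_mem ht₀ hu_mem,
    add_sub_cancel_left _ _⟩
  simpa [mul_add, mul_left_comm] using (ht k (hu k hk)).le

lemma exists_mem_signCone_forall_pos_or_eq_zero [Fintype ι] (hs : ∀ k, s k ≠ 0) :
    ∃ w ∈ signCone f s, ∀ k, 0 < s k * f k w ∨ ∀ v ∈ signCone f s, f k v = 0 := by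
  have hwitness (k : ι) :
      ∃ g ∈ signCone f s, 0 < s k * f k g ∨ ∀ v ∈ signCone f s, f k v = 0 := by
    by_cases h : ∃ v ∈ signCone f s, f k v ≠ 0
    · obtain ⟨v, hv, hk⟩ := h
      exact ⟨v, hv, .inl ((hv k).lt_of_ne (mul_ne_zero (hs k) hk).symm)⟩
    · push Not at h
      exact ⟨0, zero_mem _, .inr h⟩
  choose g hg hpos using hwitness
  refine ⟨∑ k, g k, sum_mem fun k _ => hg k, fun k => (hpos k).imp_left fun h => ?_⟩
  calc 0 < s k * f k (g k) := h
    _ ≤ ∑ j, s k * f k (g j) :=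
      Finset.single_le_sum (fun j _ => hg j k) (Finset.mem_univ k)
    _ = s k * f k (∑ j, g j) := by rw [map_sum, Finset.mul_sum]

lemma exists_pos_of_pos_and_ne_zero_of_eq_zero [Finite ι] (w : V) :
    ∃ u, ∀ k, (0 < s k * f k w → 0 < s k * f k u) ∧
      (f k w = 0 → f k ≠ 0 → f k u ≠ 0) := by
  obtain ⟨z, hz⟩ := Module.Dual.exists_forall_ne_zero_of_forall_exists
    (fun k : {k // f k ≠ 0} => f k) fun k => DFunLike.ne_iff.1 k.2
  obtain ⟨t, ht⟩ :=
    (eventually_forall_pos_mul_add (fun k => s k * f k w) (fun k => s k * f k z)).exists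
  refine ⟨t • w + z, fun k => ⟨fun hk => ?_, fun hw hk => ?_⟩⟩
  · simpa [mul_add, mul_left_comm] using ht k hk
  · simpa [hw] using hz ⟨k, hk⟩

end signCone

def activationPattern (f : ι → Module.Dual 𝕜 V) (u : V) : ι → 𝕜 :=
  fun k => if 0 ≤ f k u then 1 else 0

section activationPattern

variable {f : ι → Module.Dual 𝕜 V}

lemma two_mul_activationPattern_sub_one_ne_zero (u : V) (k : ι) :
    2 * activationPattern f u k - 1 ≠ 0 := by
  unfold activationPattern
  split_ifs <;> norm_num

lemma activationPattern_sign_mul_nonneg (u : V) (k : ι) :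
    0 ≤ (2 * activationPattern f u k - 1) * f k u := by
  unfold activationPattern
  split_ifs with h <;> linarith

lemma activationPattern_sign_mul_pos {u : V} {k : ι} (h : f k u ≠ 0) :
    0 < (2 * activationPattern f u k - 1) * f k u :=
  (activationPattern_sign_mul_nonneg u k).lt_of_ne
    (mul_ne_zero (two_mul_activationPattern_sub_one_ne_zero u k) h).symm

lemma activationPattern_eq_of_sign_mul_pos {u v : V} {k : ι}
    (h : 0 < (2 * activationPattern f v k - 1) * f k u) :
    activationPattern f u k = activationPattern f v k := by
  unfold activationPattern at *
  split_ifs at * <;> linarith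

end activationPattern

/-- Every singular cone among the hyperplane-arrangement cones of `X` is properly contained
in a non-singular one. -/
theorem singular_cone_contained_in_nonsingular {n d : ℕ} (X : Matrix (Fin n) (Fin d) ℝ)
    (patterns : Set (Fin n → ℝ))
    (hpat : patterns =
      {D | ∃ u : Fin d → ℝ, ∀ k, D k = if 0 ≤ X.mulVec u k then (1 : ℝ) else 0})
    (cone : (Fin n → ℝ) → Set (Fin d → ℝ))
    (hcone : ∀ D, cone D = {w | ∀ k, 0 ≤ (2 * D k - 1) * X.mulVec w k})
    (Di : Fin n → ℝ) (hDi : Di ∈ patterns)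
    (hsing : {x | ∃ v ∈ cone Di, ∃ w ∈ cone Di, x = v - w} ≠ Set.univ) :
    ∃ Dj ∈ patterns,
      {x | ∃ v ∈ cone Dj, ∃ w ∈ cone Dj, x = v - w} = Set.univ ∧
      cone Di ⊂ cone Dj := by
  let f : Fin n → Module.Dual ℝ (Fin d → ℝ) := fun k => LinearMap.proj k ∘ₗ X.mulVecLin
  obtain rfl : cone = fun D => (signCone f (fun k => 2 * D k - 1) : Set (Fin d → ℝ)) :=
    funext hcone
  subst hpat
  obtain ⟨u₀, hu₀⟩ := hDi
  obtain rfl : Di = activationPattern f u₀ := funext hu₀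
  have hsub (K : Set (Fin d → ℝ)) : {x | ∃ v ∈ K, ∃ w ∈ K, x = v - w} = K - K := by
    ext; simp [Set.mem_sub, eq_comm]
  simp only [hsub] at hsing ⊢
  set s : Fin n → ℝ := fun k => 2 * activationPattern f u₀ k - 1
  have hs : ∀ k, s k ≠ 0 := two_mul_activationPattern_sub_one_ne_zero u₀
  obtain ⟨w, hw, hdich⟩ := exists_mem_signCone_forall_pos_or_eq_zero (f := f) hs
  obtain ⟨k₀, hk₀, hk₀w⟩ : ∃ k, f k ≠ 0 ∧ ¬ 0 < s k * f k w := by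
    by_contra! h
    exact hsing (signCone_sub_self_eq_univ h)
  obtain ⟨u, hu⟩ := exists_pos_of_pos_and_ne_zero_of_eq_zero (f := f) (s := s) w
  have hu_ne (k) (hk : f k ≠ 0) : f k u ≠ 0 :=
    (hdich k).elim (fun h => right_ne_zero_of_mul ((hu k).1 h).ne')
      fun h => (hu k).2 (h w hw) hk
  refine ⟨activationPattern f u, ⟨u, fun k => rfl⟩,
    signCone_sub_self_eq_univ fun k hk => activationPattern_sign_mul_pos (hu_ne k hk), ?_⟩
  rw [SetLike.coe_ssubset_coe, SetLike.lt_iff_le_and_exists]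
  refine ⟨fun v hv k => ?_, u, activationPattern_sign_mul_nonneg u,
    fun hu' => hu_ne k₀ hk₀ ((hdich k₀).resolve_left hk₀w u hu')⟩
  dsimp only
  rcases hdich k with h | h
  · rw [activationPattern_eq_of_sign_mul_pos ((hu k).1 h)]
    exact hv k
  · rw [h v hv, mul_zero]
end

section
/- There is no absolute constant C such that for every polyhedral cone K = {w : X~ w >= 0} arising from a data matrix and every u in R^d there exists a decomposition u = v - w with v, w in K and ||v||_2 + ||w||_2 <= C ||u||_2. Concretely, for X with rows (1, a) and (-1, a) and u = (2, 0), any feasible decomposition satisfies ||v||_2 + ||w||_2 >= 2 sqrt(1 + 1/a^2), which tends to infinity as a -> 0+. -/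
/-- Euclidean norm on `Fin k → ℝ`. -/
noncomputable def norm2 {k : ℕ} (v : Fin k → ℝ) : ℝ := Real.sqrt (∑ i, v i ^ 2)

lemma sqrt_tri (x y t : ℝ) :
    Real.sqrt ((x + y) ^ 2 + (2 * t) ^ 2) ≤
      Real.sqrt (x ^ 2 + t ^ 2) + Real.sqrt (y ^ 2 + t ^ 2) := by
  have hx : (0:ℝ) ≤ x ^ 2 + t ^ 2 := by positivity
  have hy : (0:ℝ) ≤ y ^ 2 + t ^ 2 := by positivity
  have hcs : x * y + t ^ 2 ≤ Real.sqrt ((x ^ 2 + t ^ 2) * (y ^ 2 + t ^ 2)) := by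
    have h1 : (x * y + t ^ 2) ^ 2 ≤ (x ^ 2 + t ^ 2) * (y ^ 2 + t ^ 2) := by nlinarith [sq_nonneg (x*t - y*t)]
    calc x * y + t ^ 2 ≤ |x * y + t ^ 2| := le_abs_self _
    _ = Real.sqrt ((x * y + t ^ 2) ^ 2) := (Real.sqrt_sq_eq_abs _).symm
    _ ≤ _ := Real.sqrt_le_sqrt h1
  have key : (x + y) ^ 2 + (2 * t) ^ 2 ≤
      (Real.sqrt (x ^ 2 + t ^ 2) + Real.sqrt (y ^ 2 + t ^ 2)) ^ 2 := by
    have e1 : Real.sqrt (x ^ 2 + t ^ 2) ^ 2 = x ^ 2 + t ^ 2 := Real.sq_sqrt hx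
    have e2 : Real.sqrt (y ^ 2 + t ^ 2) ^ 2 = y ^ 2 + t ^ 2 := Real.sq_sqrt hy
    have e3 : Real.sqrt (x ^ 2 + t ^ 2) * Real.sqrt (y ^ 2 + t ^ 2)
        = Real.sqrt ((x ^ 2 + t ^ 2) * (y ^ 2 + t ^ 2)) := (Real.sqrt_mul hx _).symm
    nlinarith [hcs]
  calc Real.sqrt ((x + y) ^ 2 + (2 * t) ^ 2)
      ≤ Real.sqrt ((Real.sqrt (x ^ 2 + t ^ 2) + Real.sqrt (y ^ 2 + t ^ 2)) ^ 2) :=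
        Real.sqrt_le_sqrt key
    _ = _ := Real.sqrt_sq (by positivity)

lemma main_bound (a : ℝ) (ha : 0 < a)
    (v : Fin 2 → ℝ) (hv : v 0 / a ≤ v 1 ∧ -v 0 / a ≤ v 1)
    (w : Fin 2 → ℝ) (hw : w 0 / a ≤ w 1 ∧ -w 0 / a ≤ w 1)
    (huvw : v - w = ![2, 0]) :
    2 * Real.sqrt (1 + 1 / a ^ 2) ≤ norm2 v + norm2 w := by
  have h0 : v 0 - w 0 = 2 := by
    have := congrFun huvw 0; simpa using this
  have h1 : v 1 - w 1 = 0 := by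
    have := congrFun huvw 1; simpa using this
  have hv0 : v 0 ≤ a * v 1 := by
    have := hv.1; rw [div_le_iff₀ ha] at this; linarith [this]
  have hw0 : -w 0 ≤ a * w 1 := by
    have := hw.2; rw [div_le_iff₀ ha] at this; linarith [this]
  -- v 1 = w 1 ≥ 1/a
  have hv1 : 1 / a ≤ v 1 := by
    rw [div_le_iff₀ ha]
    nlinarith
  have hw1 : 1 / a ≤ w 1 := by linarith
  have ht : (0:ℝ) < 1 / a := by positivity
  have hnv : Real.sqrt (v 0 ^ 2 + (1/a) ^ 2) ≤ norm2 v := by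
    unfold norm2
    rw [Fin.sum_univ_two]
    apply Real.sqrt_le_sqrt
    nlinarith
  have hnw : Real.sqrt (w 0 ^ 2 + (1/a) ^ 2) ≤ norm2 w := by
    unfold norm2
    rw [Fin.sum_univ_two]
    apply Real.sqrt_le_sqrt
    nlinarith
  have tri := sqrt_tri (v 0) (-w 0) (1/a)
  have heq : (v 0 + -w 0) ^ 2 + (2 * (1/a)) ^ 2 = 4 * (1 + 1 / a ^ 2) := by
    have : v 0 + -w 0 = 2 := by linarith
    rw [this]
    field_simp
    ring
  rw [heq] at tri
  have h4 : Real.sqrt (4 * (1 + 1 / a ^ 2)) = 2 * Real.sqrt (1 + 1 / a ^ 2) := by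
    rw [show (4:ℝ) = 2^2 by norm_num, Real.sqrt_mul (by positivity), Real.sqrt_sq (by norm_num)]
  rw [h4] at tri
  have : (-w 0) ^ 2 = w 0 ^ 2 := by ring
  rw [this] at tri
  linarith

/-- No absolute constant `C` bounds every cone decomposition: for the cones
`K_a = {x : x₂ ≥ x₁/a, x₂ ≥ -x₁/a}` and `u = (2,0)`, every decomposition `u = v - w` with
`v, w ∈ K_a` satisfies `‖v‖ + ‖w‖ ≥ 2√(1 + 1/a²)`, which blows up as `a → 0⁺`; in
particular no constant `C` works for all `a > 0`. -/
theorem no_constant_factor_cone_decomposition :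
    (∀ a : ℝ, 0 < a →
      ∀ v ∈ {x : Fin 2 → ℝ | x 0 / a ≤ x 1 ∧ -x 0 / a ≤ x 1},
      ∀ w ∈ {x : Fin 2 → ℝ | x 0 / a ≤ x 1 ∧ -x 0 / a ≤ x 1},
        v - w = ![2, 0] →
        2 * Real.sqrt (1 + 1 / a ^ 2) ≤ norm2 v + norm2 w) ∧
    ¬ ∃ C : ℝ, ∀ a : ℝ, 0 < a →
      ∃ v ∈ {x : Fin 2 → ℝ | x 0 / a ≤ x 1 ∧ -x 0 / a ≤ x 1},
      ∃ w ∈ {x : Fin 2 → ℝ | x 0 / a ≤ x 1 ∧ -x 0 / a ≤ x 1},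
        v - w = ![2, 0] ∧ norm2 v + norm2 w ≤ C * norm2 ![2, 0] := by
  constructor
  · intro a ha v hv w hw huvw
    exact main_bound a ha v hv w hw huvw
  · rintro ⟨C, hC⟩
    set a : ℝ := 1 / (|C| + 1) with ha_def
    have ha : 0 < a := by positivity
    obtain ⟨v, hv, w, hw, huvw, hbound⟩ := hC a ha
    have hmain := main_bound a ha v hv w hw huvw
    have hnorm : norm2 ![2, 0] = 2 := by
      unfold norm2
      rw [Fin.sum_univ_two]
      norm_num
    rw [hnorm] at hbound
    have hinv : 1 / a = |C| + 1 := by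
      rw [ha_def]; field_simp
    have hgt : |C| + 1 ≤ Real.sqrt (1 + 1 / a ^ 2) := by
      have : (|C| + 1) ^ 2 ≤ 1 + 1 / a ^ 2 := by
        have : 1 / a ^ 2 = (|C| + 1) ^ 2 := by
          rw [show 1 / a ^ 2 = (1/a)^2 by ring, hinv]
        rw [this]; linarith
      calc |C| + 1 = Real.sqrt ((|C| + 1) ^ 2) := (Real.sqrt_sq (by positivity)).symm
        _ ≤ _ := Real.sqrt_le_sqrt this
    have hCle : C ≤ |C| := le_abs_self C
    linarith
end

section
/- Let K = {w : X~ w >= 0} contain u in K - K, and suppose (v-bar, w-bar) minimizes ||v||_2 + ||w||_2 over pairs v, w in K with v - w = u. Then there exists a subset J of the row indices such that ||v-bar||_2 + ||w-bar||_2 <= (1 + 2 kappa(X~_J)) ||u||_2, where kappa(A) denotes the ratio of the largest to smallest nonzero singular value of A. -/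
open Matrix

/-- The set of nonzero singular values of `A`, i.e. positive `σ` with `σ²` an eigenvalue
of `Aᵀ A`. -/
noncomputable def singVals {ι : Type*} [Fintype ι] {d : ℕ} (A : Matrix ι (Fin d) ℝ) :
    Set ℝ :=
  {σ : ℝ | 0 < σ ∧ ∃ v : Fin d → ℝ, v ≠ 0 ∧ (Aᵀ * A).mulVec v = σ ^ 2 • v}

/-- Ratio of the largest to the smallest nonzero singular value of `A`. -/
noncomputable def kappa {ι : Type*} [Fintype ι] {d : ℕ} (A : Matrix ι (Fin d) ℝ) : ℝ :=
  sSup (singVals A) / sInf (singVals A)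

section Aux
variable {ι : Type*} [Fintype ι] {d : ℕ}

noncomputable def toE {k : Type*} [Fintype k] (v : k → ℝ) : EuclideanSpace ℝ k :=
  (WithLp.equiv 2 (k → ℝ)).symm v

lemma toE_apply {k : Type*} [Fintype k] (v : k → ℝ) (i : k) : toE v i = v i := rfl

lemma norm_toE {k : Type*} [Fintype k] (v : k → ℝ) :
    ‖toE v‖ = Real.sqrt (∑ i, v i ^ 2) := by
  rw [EuclideanSpace.norm_eq]
  congr 1
  refine Finset.sum_congr rfl fun i _ => ?_
  rw [toE_apply, Real.norm_eq_abs, sq_abs]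

lemma inner_toE (x y : ι → ℝ) : (inner ℝ (toE x) (toE y) : ℝ) = x ⬝ᵥ y := by
  rw [PiLp.inner_apply]
  exact Finset.sum_congr rfl fun i _ => by simp [toE_apply, mul_comm]

variable (A : Matrix ι (Fin d) ℝ)

lemma hermM : (Aᵀ * A).IsHermitian := by
  have := Matrix.isHermitian_conjTranspose_mul_self A
  rwa [Matrix.conjTranspose_eq_transpose_of_trivial] at this

lemma psdM : (Aᵀ * A).PosSemidef := by
  have := Matrix.posSemidef_conjTranspose_mul_self A
  rwa [Matrix.conjTranspose_eq_transpose_of_trivial] at this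

end Aux

section Spec
variable {ι : Type*} [Fintype ι] {d : ℕ} (A : Matrix ι (Fin d) ℝ)

noncomputable def evB : OrthonormalBasis (Fin d) ℝ (EuclideanSpace ℝ (Fin d)) :=
  (hermM A).eigenvectorBasis

noncomputable def lam : Fin d → ℝ := (hermM A).eigenvalues

lemma lam_nonneg (j : Fin d) : 0 ≤ lam A j := (psdM A).eigenvalues_nonneg j

lemma T_evB (j : Fin d) :
    toEuclideanLin (Aᵀ * A) (evB A j) = lam A j • evB A j := by
  have h := (hermM A).mulVec_eigenvectorBasis j
  ext i
  exact congrFun h i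

lemma inner_sum_mul (x y : EuclideanSpace ℝ (Fin d)) :
    (inner ℝ x y : ℝ) = ∑ j, x j * y j := by
  rw [PiLp.inner_apply]; exact Finset.sum_congr rfl fun j _ => by simp [mul_comm]

lemma repr_T (x : EuclideanSpace ℝ (Fin d)) (j : Fin d) :
    (evB A).repr (toEuclideanLin (Aᵀ * A) x) j = lam A j * (evB A).repr x j := by
  have hsym := (Matrix.isHermitian_iff_isSymmetric).1 (hermM A)
  rw [OrthonormalBasis.repr_apply_apply, OrthonormalBasis.repr_apply_apply,
    ← hsym (evB A j) x, T_evB, inner_smul_left]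
  simp

lemma normsq_repr (x : EuclideanSpace ℝ (Fin d)) :
    ‖x‖ ^ 2 = ∑ j, ((evB A).repr x j) ^ 2 := by
  rw [← (evB A).repr.norm_map x, ← real_inner_self_eq_norm_sq, inner_sum_mul]
  exact Finset.sum_congr rfl fun j _ => (sq _).symm

lemma inner_T_repr (x : EuclideanSpace ℝ (Fin d)) :
    (inner ℝ x (toEuclideanLin (Aᵀ * A) x) : ℝ) = ∑ j, lam A j * ((evB A).repr x j) ^ 2 := by
  rw [← (evB A).repr.inner_map_map, inner_sum_mul]
  refine Finset.sum_congr rfl fun j _ => ?_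
  rw [repr_T]; ring

lemma inner_T_eq_normsq (x : EuclideanSpace ℝ (Fin d)) :
    (inner ℝ x (toEuclideanLin (Aᵀ * A) x) : ℝ) = ‖toEuclideanLin A x‖ ^ 2 := by
  rw [← real_inner_self_eq_norm_sq]
  have h1 : (inner ℝ x (toEuclideanLin (Aᵀ * A) x) : ℝ)
      = inner ℝ (toE ((WithLp.equiv 2 _) x)) (toE ((Aᵀ * A) *ᵥ (WithLp.equiv 2 _) x)) := rfl
  have h2 : (inner ℝ (toEuclideanLin A x) (toEuclideanLin A x) : ℝ)
      = inner ℝ (toE (A *ᵥ (WithLp.equiv 2 _) x)) (toE (A *ᵥ (WithLp.equiv 2 _) x)) := rfl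
  rw [h1, h2, inner_toE, inner_toE, ← Matrix.mulVec_mulVec, dotProduct_mulVec,
    Matrix.vecMul_transpose]

lemma evB_ne_zero (j : Fin d) : evB A j ≠ 0 := by
  have := (evB A).toBasis.ne_zero j
  rwa [OrthonormalBasis.coe_toBasis] at this

lemma sqrt_lam_mem {j : Fin d} (h : 0 < lam A j) : Real.sqrt (lam A j) ∈ singVals A := by
  refine ⟨Real.sqrt_pos.2 h, fun i => evB A j i, ?_, ?_⟩
  · intro hz
    apply evB_ne_zero A j
    ext i
    exact congrFun hz i
  · rw [Real.sq_sqrt h.le]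
    have h2 : ∀ i, ((Aᵀ * A) *ᵥ fun i => evB A j i) i = (lam A j • fun i => evB A j i) i :=
      fun i => congrFun (congrArg (fun (y : EuclideanSpace ℝ (Fin d)) => (y : Fin d → ℝ)) (T_evB A j)) i
    exact funext h2

lemma mem_singVals_imp {σ : ℝ} (h : σ ∈ singVals A) :
    ∃ j, 0 < lam A j ∧ σ = Real.sqrt (lam A j) := by
  obtain ⟨hσ, v, hv0, hveq⟩ := h
  set x : EuclideanSpace ℝ (Fin d) := toE v with hx
  have hTx : toEuclideanLin (Aᵀ * A) x = σ ^ 2 • x := by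
    ext i
    show ((Aᵀ * A) *ᵥ v) i = (σ ^ 2 • x) i
    rw [hveq]; rfl
  have hx0 : x ≠ 0 := by
    intro h0; apply hv0; funext i
    exact congrFun (congrArg (fun (y : EuclideanSpace ℝ (Fin d)) => (y : Fin d → ℝ)) h0) i
  have hr : (evB A).repr x ≠ 0 := fun h0 => hx0 ((evB A).repr.map_eq_zero_iff.1 h0)
  obtain ⟨j, hj⟩ : ∃ j, (evB A).repr x j ≠ 0 := by
    by_contra hall
    push_neg at hall
    exact hr (by ext j; exact hall j)
  have heq : lam A j * (evB A).repr x j = σ ^ 2 * (evB A).repr x j := by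
    rw [← repr_T, hTx, _root_.map_smul]; rfl
  have hlj : lam A j = σ ^ 2 := mul_right_cancel₀ hj heq
  exact ⟨j, hlj ▸ (by positivity), by rw [hlj, Real.sqrt_sq hσ.le]⟩

lemma singVals_subset : singVals A ⊆ Set.range (fun j => Real.sqrt (lam A j)) := by
  intro σ hσ
  obtain ⟨j, _, hj⟩ := mem_singVals_imp A hσ
  exact ⟨j, hj.symm⟩

lemma bddAbove_singVals : BddAbove (singVals A) :=
  ((Set.finite_range _).subset (singVals_subset A)).bddAbove

lemma sSup_singVals_nonneg : 0 ≤ sSup (singVals A) :=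
  Real.sSup_nonneg (fun σ hσ => hσ.1.le)

lemma sInf_singVals_nonneg : 0 ≤ sInf (singVals A) :=
  Real.sInf_nonneg (fun σ hσ => hσ.1.le)

lemma norm_AL_le (x : EuclideanSpace ℝ (Fin d)) :
    ‖toEuclideanLin A x‖ ≤ sSup (singVals A) * ‖x‖ := by
  set s := sSup (singVals A) with hs
  have hs0 : 0 ≤ s := sSup_singVals_nonneg A
  have hsq : ‖toEuclideanLin A x‖ ^ 2 ≤ (s * ‖x‖) ^ 2 := by
    rw [← inner_T_eq_normsq, inner_T_repr, mul_pow, normsq_repr A x, Finset.mul_sum]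
    refine Finset.sum_le_sum fun j _ => ?_
    rcases eq_or_lt_of_le (lam_nonneg A j) with h0 | hpos
    · rw [← h0, zero_mul]; positivity
    · have hmem := sqrt_lam_mem A hpos
      have hle : Real.sqrt (lam A j) ≤ s := le_csSup (bddAbove_singVals A) hmem
      have : lam A j ≤ s ^ 2 := by
        have := pow_le_pow_left₀ (Real.sqrt_nonneg _) hle 2
        rwa [Real.sq_sqrt (lam_nonneg A j)] at this
      nlinarith [sq_nonneg ((evB A).repr x j)]
  have := Real.sqrt_le_sqrt hsq
  rwa [Real.sqrt_sq (norm_nonneg _), Real.sqrt_sq (by positivity)] at this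

lemma AL_evB_zero {j : Fin d} (h : lam A j = 0) : toEuclideanLin A (evB A j) = 0 := by
  have h1 : ‖toEuclideanLin A (evB A j)‖ ^ 2 = 0 := by
    rw [← inner_T_eq_normsq, T_evB, inner_smul_right, h]
    simp
  have := pow_eq_zero_iff (n := 2) (by norm_num) |>.1 h1
  exact norm_eq_zero.1 this

lemma repr_zero_of_orth {x : EuclideanSpace ℝ (Fin d)}
    (hx : x ∈ (LinearMap.ker (toEuclideanLin A))ᗮ) {j : Fin d} (h : lam A j = 0) :
    (evB A).repr x j = 0 := by
  rw [OrthonormalBasis.repr_apply_apply]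
  exact hx (evB A j) (LinearMap.mem_ker.2 (AL_evB_zero A h))

lemma norm_AL_ge {x : EuclideanSpace ℝ (Fin d)}
    (hx : x ∈ (LinearMap.ker (toEuclideanLin A))ᗮ) :
    sInf (singVals A) * ‖x‖ ≤ ‖toEuclideanLin A x‖ := by
  set m := sInf (singVals A) with hm
  have hm0 : 0 ≤ m := sInf_singVals_nonneg A
  have hsq : (m * ‖x‖) ^ 2 ≤ ‖toEuclideanLin A x‖ ^ 2 := by
    rw [← inner_T_eq_normsq, inner_T_repr, mul_pow, normsq_repr A x, Finset.mul_sum]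
    refine Finset.sum_le_sum fun j _ => ?_
    rcases eq_or_lt_of_le (lam_nonneg A j) with h0 | hpos
    · rw [repr_zero_of_orth A hx h0.symm]; simp
    · have hmem := sqrt_lam_mem A hpos
      have hle : m ≤ Real.sqrt (lam A j) := csInf_le ⟨0, fun σ hσ => hσ.1.le⟩ hmem
      have : m ^ 2 ≤ lam A j := by
        have := pow_le_pow_left₀ hm0 hle 2
        rwa [Real.sq_sqrt (lam_nonneg A j)] at this
      nlinarith [sq_nonneg ((evB A).repr x j)]
  have := Real.sqrt_le_sqrt hsq
  rwa [Real.sqrt_sq (norm_nonneg _), Real.sqrt_sq (by positivity)] at this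

lemma singVals_nonempty_of {x : EuclideanSpace ℝ (Fin d)}
    (hx : x ∈ (LinearMap.ker (toEuclideanLin A))ᗮ) (hx0 : x ≠ 0) :
    (singVals A).Nonempty := by
  by_contra hemp
  rw [Set.not_nonempty_iff_eq_empty] at hemp
  apply hx0
  have hall : ∀ j, (evB A).repr x j = 0 := by
    intro j
    rcases eq_or_lt_of_le (lam_nonneg A j) with h0 | hpos
    · exact repr_zero_of_orth A hx h0.symm
    · exact absurd (sqrt_lam_mem A hpos) (by rw [hemp]; exact Set.notMem_empty _)
  have : (evB A).repr x = 0 := by ext j; exact hall j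
  exact (evB A).repr.map_eq_zero_iff.1 this

lemma sInf_singVals_pos (h : (singVals A).Nonempty) : 0 < sInf (singVals A) := by
  obtain ⟨σ₀, hσ₀⟩ := h
  obtain ⟨j₀, hj₀, _⟩ := mem_singVals_imp A hσ₀
  set S := Finset.univ.filter (fun j => 0 < lam A j) with hS
  have hSne : S.Nonempty := ⟨j₀, by simp [hS, hj₀]⟩
  set m₀ := S.inf' hSne (fun j => Real.sqrt (lam A j)) with hm₀
  have hm₀pos : 0 < m₀ := by
    rw [hm₀, Finset.lt_inf'_iff]
    intro j hj
    exact Real.sqrt_pos.2 (Finset.mem_filter.1 hj).2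
  refine lt_of_lt_of_le hm₀pos (le_csInf ⟨σ₀, hσ₀⟩ ?_)
  intro σ hσ
  obtain ⟨j, hjpos, hjeq⟩ := mem_singVals_imp A hσ
  rw [hjeq]
  exact Finset.inf'_le _ (Finset.mem_filter.2 ⟨Finset.mem_univ j, hjpos⟩)

lemma AL_zero_of_empty (h : singVals A = ∅) (x : EuclideanSpace ℝ (Fin d)) :
    toEuclideanLin A x = 0 := by
  have hall : ∀ j, lam A j = 0 := by
    intro j
    rcases eq_or_lt_of_le (lam_nonneg A j) with h0 | hpos
    · exact h0.symm
    · exact absurd (sqrt_lam_mem A hpos) (by rw [h]; exact Set.notMem_empty _)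
  have h1 : ‖toEuclideanLin A x‖ ^ 2 = 0 := by
    rw [← inner_T_eq_normsq, inner_T_repr]
    refine Finset.sum_eq_zero fun j _ => by rw [hall j]; ring
  exact norm_eq_zero.1 (pow_eq_zero_iff (n := 2) (by norm_num) |>.1 h1)

end Spec

section Calc1
open scoped RealInnerProductSpace

lemma sqrt_form {d : ℕ} (v z : EuclideanSpace ℝ (Fin d)) (t : ℝ) :
    ‖v - t • z‖ = Real.sqrt (‖v‖ ^ 2 - 2 * ⟪v, z⟫ * t + ‖z‖ ^ 2 * t ^ 2) := by
  have h1 : ‖v - t • z‖ ^ 2 = ‖v‖ ^ 2 - 2 * ⟪v, z⟫ * t + ‖z‖ ^ 2 * t ^ 2 := by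
    rw [norm_sub_sq_real, real_inner_smul_right, norm_smul]
    simp [mul_pow, sq_abs]
    ring
  rw [← h1, Real.sqrt_sq (norm_nonneg _)]

lemma opt_inner_zero {d : ℕ} (v w z : EuclideanSpace ℝ (Fin d)) (hv : v ≠ 0) (hw : w ≠ 0)
    (hloc : IsLocalMin (fun t : ℝ => ‖v - t • z‖ + ‖w - t • z‖) 0) :
    ⟪v, z⟫ / ‖v‖ + ⟪w, z⟫ / ‖w‖ = 0 := by
  have hq : ∀ y : EuclideanSpace ℝ (Fin d), y ≠ 0 → HasDerivAt
      (fun t : ℝ => Real.sqrt (‖y‖ ^ 2 - 2 * ⟪y, z⟫ * t + ‖z‖ ^ 2 * t ^ 2))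
      (-(⟪y, z⟫ / ‖y‖)) 0 := by
    intro y hy
    have hpoly : HasDerivAt (fun t : ℝ => ‖y‖ ^ 2 - 2 * ⟪y, z⟫ * t + ‖z‖ ^ 2 * t ^ 2)
        (-(2 * ⟪y, z⟫)) 0 := by
      have h1 : HasDerivAt (fun t : ℝ => 2 * ⟪y, z⟫ * t) (2 * ⟪y, z⟫) 0 := by
        simpa using (hasDerivAt_id (0:ℝ)).const_mul (2 * ⟪y, z⟫)
      have h2 : HasDerivAt (fun t : ℝ => ‖z‖ ^ 2 * t ^ 2) (0:ℝ) 0 := by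
        simpa using (hasDerivAt_pow 2 (0:ℝ)).const_mul (‖z‖ ^ 2)
      exact (((hasDerivAt_const (0:ℝ) (‖y‖ ^ 2)).sub h1).add h2).congr_deriv (by ring)
    have hne : ‖y‖ ^ 2 - 2 * ⟪y, z⟫ * 0 + ‖z‖ ^ 2 * 0 ^ 2 ≠ 0 := by
      simpa using pow_ne_zero 2 (norm_ne_zero_iff.2 hy)
    have := (Real.hasDerivAt_sqrt hne).comp 0 hpoly
    have heval : Real.sqrt (‖y‖ ^ 2 - 2 * ⟪y, z⟫ * 0 + ‖z‖ ^ 2 * 0 ^ 2) = ‖y‖ := by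
      simp [Real.sqrt_sq (norm_nonneg y)]
    rw [heval] at this
    refine this.congr_deriv ?_
    have hy' : ‖y‖ ≠ 0 := norm_ne_zero_iff.2 hy
    field_simp
  have hg : HasDerivAt (fun t : ℝ => ‖v - t • z‖ + ‖w - t • z‖)
      (-(⟪v, z⟫ / ‖v‖) + -(⟪w, z⟫ / ‖w‖)) 0 := by
    have := (hq v hv).add (hq w hw)
    have hfe : (fun t : ℝ => ‖v - t • z‖ + ‖w - t • z‖)
        = fun t : ℝ => Real.sqrt (‖v‖ ^ 2 - 2 * ⟪v, z⟫ * t + ‖z‖ ^ 2 * t ^ 2)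
          + Real.sqrt (‖w‖ ^ 2 - 2 * ⟪w, z⟫ * t + ‖z‖ ^ 2 * t ^ 2) := by
      funext t; rw [sqrt_form, sqrt_form]
    rw [hfe]
    exact this
  have hD := hloc.hasDerivAt_eq_zero hg
  linarith [hD]

end Calc1

lemma kappa_nonneg' {ι : Type*} [Fintype ι] {d : ℕ} (A : Matrix ι (Fin d) ℝ) :
    0 ≤ sSup (singVals A) / sInf (singVals A) :=
  div_nonneg (sSup_singVals_nonneg A) (sInf_singVals_nonneg A)

lemma norm2_toE {d : ℕ} (v : Fin d → ℝ) :
    Real.sqrt (∑ i, v i ^ 2) = ‖toE v‖ := (norm_toE v).symm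

lemma norm2_neg {d : ℕ} (v : Fin d → ℝ) :
    Real.sqrt (∑ i, (-v) i ^ 2) = Real.sqrt (∑ i, v i ^ 2) := by
  congr 1
  exact Finset.sum_congr rfl fun i _ => by simp
section Main
open scoped RealInnerProductSpace

/-- If `(v̄, w̄)` minimizes `‖v‖₂ + ‖w‖₂` over decompositions `v - w = u` with
`v, w ∈ K = {w : X̃ w ≥ 0}`, then there is a row subset `J` with
`‖v̄‖₂ + ‖w̄‖₂ ≤ (1 + 2 κ(X̃_J)) ‖u‖₂`. -/
theorem min_norm_cone_decomposition_bound {n d : ℕ} (Xt : Matrix (Fin n) (Fin d) ℝ)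
    (K : Set (Fin d → ℝ)) (hK : K = {w | ∀ i, 0 ≤ Xt.mulVec w i})
    (u : Fin d → ℝ)
    (vbar wbar : Fin d → ℝ) (hv : vbar ∈ K) (hw : wbar ∈ K) (hvw : vbar - wbar = u)
    (hmin : ∀ v ∈ K, ∀ w ∈ K, v - w = u → norm2 vbar + norm2 wbar ≤ norm2 v + norm2 w) :
    ∃ J : Finset (Fin n),
      norm2 vbar + norm2 wbar ≤
        (1 + 2 * kappa (Xt.submatrix (fun i : {i // i ∈ J} => (i : Fin n)) id)) * norm2 u := by
  classical
  subst hK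
  have hn2 : ∀ v : Fin d → ℝ, norm2 v = ‖toE v‖ := fun v => norm2_toE v
  have hn20 : norm2 (0 : Fin d → ℝ) = 0 := by simp [norm2]
  -- trivial cases
  by_cases hv0 : vbar = 0
  · refine ⟨∅, ?_⟩
    have hu : u = -wbar := by rw [← hvw, hv0, zero_sub]
    have hnu : norm2 u = norm2 wbar := by rw [hu]; exact norm2_neg wbar
    have hκ := kappa_nonneg' (Xt.submatrix (fun i : {i // i ∈ (∅ : Finset (Fin n))} => (i : Fin n)) id)
    have h2 : (0:ℝ) ≤ norm2 wbar := Real.sqrt_nonneg _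
    rw [hv0, hn20, hnu]
    unfold kappa
    nlinarith
  by_cases hw0 : wbar = 0
  · refine ⟨∅, ?_⟩
    have hu : u = vbar := by rw [← hvw, hw0, sub_zero]
    have hκ := kappa_nonneg' (Xt.submatrix (fun i : {i // i ∈ (∅ : Finset (Fin n))} => (i : Fin n)) id)
    have h2 : (0:ℝ) ≤ norm2 vbar := Real.sqrt_nonneg _
    rw [hw0, hn20, hu]
    unfold kappa
    nlinarith
  -- main case
  set J : Finset (Fin n) :=
    Finset.univ.filter (fun i => Xt.mulVec vbar i = 0 ∨ Xt.mulVec wbar i = 0) with hJ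
  refine ⟨J, ?_⟩
  set A : Matrix {i // i ∈ J} (Fin d) ℝ :=
    Xt.submatrix (fun i : {i // i ∈ J} => (i : Fin n)) id with hA
  set kerA : Submodule ℝ (EuclideanSpace ℝ (Fin d)) := LinearMap.ker (toEuclideanLin A) with hkerA
  have hALapp : ∀ (x : Fin d → ℝ) (i : {i // i ∈ J}),
      toEuclideanLin A (toE x) i = Xt.mulVec x i.1 := by
    intro x i
    show (A *ᵥ x) i = Xt.mulVec x i.1
    simp [hA, Matrix.mulVec, dotProduct, Matrix.submatrix_apply]
  -- projections
  set z : EuclideanSpace ℝ (Fin d) := (Submodule.orthogonalProjection kerA (toE wbar) : EuclideanSpace ℝ (Fin d)) with hz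
  set z' : EuclideanSpace ℝ (Fin d) := (Submodule.orthogonalProjection kerA (toE vbar) : EuclideanSpace ℝ (Fin d)) with hz'
  have hz_ker : z ∈ kerA := SetLike.coe_mem _
  have hz'_ker : z' ∈ kerA := SetLike.coe_mem _
  have hwo : toE wbar - z ∈ kerAᗮ := Submodule.sub_starProjection_mem_orthogonal (toE wbar)
  have hvo : toE vbar - z' ∈ kerAᗮ := Submodule.sub_starProjection_mem_orthogonal (toE vbar)
  have hve : toE vbar ≠ 0 := fun h => hv0 (funext fun i => congrFun (congrArg (fun (y : EuclideanSpace ℝ (Fin d)) => (y : Fin d → ℝ)) h) i)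
  have hwe : toE wbar ≠ 0 := fun h => hw0 (funext fun i => congrFun (congrArg (fun (y : EuclideanSpace ℝ (Fin d)) => (y : Fin d → ℝ)) h) i)
  -- membership in ker kills constraints in J
  have hker_row : ∀ y ∈ kerA, ∀ i : Fin n, i ∈ J → Xt.mulVec (fun k => y k) i = 0 := by
    intro y hy i hi
    have h0 : toEuclideanLin A y = 0 := LinearMap.mem_ker.1 hy
    have : toEuclideanLin A (toE (fun k => y k)) ⟨i, hi⟩ = Xt.mulVec (fun k => y k) i :=
      hALapp _ ⟨i, hi⟩
    rw [← this]
    have hyy : toE (fun k => y k) = y := rfl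
    rw [hyy, h0]
    rfl
  -- eventual feasibility and local min
  have hlocgen : ∀ y : EuclideanSpace ℝ (Fin d), y ∈ kerA →
      IsLocalMin (fun t : ℝ => ‖toE vbar - t • y‖ + ‖toE wbar - t • y‖) 0 := by
    intro y hy
    set yf : Fin d → ℝ := fun k => y k with hyf
    have hsub : ∀ (x : Fin d → ℝ) (t : ℝ), toE x - t • y = toE (x - t • yf) := by
      intro x t; ext i
      simp [toE_apply, PiLp.sub_apply, PiLp.smul_apply, hyf]
    have hfe : ∀ (x : Fin d → ℝ) (i : Fin n) (t : ℝ),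
        Xt.mulVec (x - t • yf) i = Xt.mulVec x i - t * Xt.mulVec yf i := by
      intro x i t
      rw [Matrix.mulVec_sub, Matrix.mulVec_smul]
      simp
    have hfeas : ∀ᶠ t : ℝ in nhds 0,
        (∀ i, 0 ≤ Xt.mulVec (vbar - t • yf) i) ∧ (∀ i, 0 ≤ Xt.mulVec (wbar - t • yf) i) := by
      rw [Filter.eventually_and]
      constructor <;>
      · rw [Filter.eventually_all]
        intro i
        by_cases hi : i ∈ J
        · refine Filter.Eventually.of_forall fun t => ?_
          rw [hfe, hker_row y hy i hi, mul_zero, sub_zero]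
          first
          | exact hv i
          | exact hw i
        · have hpos : 0 < Xt.mulVec vbar i ∧ 0 < Xt.mulVec wbar i := by
            rw [hJ] at hi
            simp only [Finset.mem_filter, Finset.mem_univ, true_and] at hi
            push_neg at hi
            exact ⟨lt_of_le_of_ne (hv i) (Ne.symm hi.1), lt_of_le_of_ne (hw i) (Ne.symm hi.2)⟩
          have hcont : ∀ c : ℝ, ContinuousAt (fun t : ℝ => c - t * Xt.mulVec yf i) 0 := by
            intro c; fun_prop
          first
          | · have := (hcont (Xt.mulVec vbar i)).eventually (eventually_gt_nhds (by simpa using hpos.1))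
              exact this.mono fun t ht => by rw [hfe]; exact le_of_lt (by simpa using ht)
          | · have := (hcont (Xt.mulVec wbar i)).eventually (eventually_gt_nhds (by simpa using hpos.2))
              exact this.mono fun t ht => by rw [hfe]; exact le_of_lt (by simpa using ht)
    refine hfeas.mono fun t ⟨h1, h2⟩ => ?_
    have hsubu : (vbar - t • yf) - (wbar - t • yf) = u := by
      rw [← hvw]; abel
    have := hmin _ h1 _ h2 hsubu
    simp only [hn2] at this
    simpa [hsub, zero_smul, sub_zero] using this
  -- first-order optimality conditions
  have hα : (0:ℝ) < ‖toE vbar‖ := norm_pos_iff.2 hve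
  have hβ : (0:ℝ) < ‖toE wbar‖ := norm_pos_iff.2 hwe
  have hα' : ‖toE vbar‖ ≠ 0 := ne_of_gt hα
  have hβ' : ‖toE wbar‖ ≠ 0 := ne_of_gt hβ
  set α := ‖toE vbar‖ with hαdef
  set β := ‖toE wbar‖ with hβdef
  set p := ‖z‖ with hpdef
  set q := ‖z'‖ with hqdef
  have c1 := opt_inner_zero (toE vbar) (toE wbar) z hve hwe (hlocgen z hz_ker)
  have c2 := opt_inner_zero (toE vbar) (toE wbar) z' hve hwe (hlocgen z' hz'_ker)
  have e1 : ⟪toE wbar, z⟫ = p ^ 2 := by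
    have h0 : ⟪z, toE wbar - z⟫ = 0 := (Submodule.mem_orthogonal kerA _).1 hwo z hz_ker
    have h1 : ⟪toE wbar - z, z⟫ = 0 := by rw [real_inner_comm]; exact h0
    have h2 : ⟪toE wbar - z, z⟫ = ⟪toE wbar, z⟫ - ⟪z, z⟫ := inner_sub_left _ _ _
    have h3 : ⟪z, z⟫ = p ^ 2 := real_inner_self_eq_norm_sq z
    linarith
  have e2 : ⟪toE vbar, z⟫ = ⟪z', z⟫ := by
    have h0 : ⟪z, toE vbar - z'⟫ = 0 := (Submodule.mem_orthogonal kerA _).1 hvo z hz_ker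
    have h1 : ⟪toE vbar - z', z⟫ = 0 := by rw [real_inner_comm]; exact h0
    have h2 : ⟪toE vbar - z', z⟫ = ⟪toE vbar, z⟫ - ⟪z', z⟫ := inner_sub_left _ _ _
    linarith
  have e3 : ⟪toE vbar, z'⟫ = q ^ 2 := by
    have h0 : ⟪z', toE vbar - z'⟫ = 0 := (Submodule.mem_orthogonal kerA _).1 hvo z' hz'_ker
    have h1 : ⟪toE vbar - z', z'⟫ = 0 := by rw [real_inner_comm]; exact h0
    have h2 : ⟪toE vbar - z', z'⟫ = ⟪toE vbar, z'⟫ - ⟪z', z'⟫ := inner_sub_left _ _ _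
    have h3 : ⟪z', z'⟫ = q ^ 2 := real_inner_self_eq_norm_sq z'
    linarith
  have e4 : ⟪toE wbar, z'⟫ = ⟪z', z⟫ := by
    have h0 : ⟪z', toE wbar - z⟫ = 0 := (Submodule.mem_orthogonal kerA _).1 hwo z' hz'_ker
    have h1 : ⟪toE wbar - z, z'⟫ = 0 := by rw [real_inner_comm]; exact h0
    have h2 : ⟪toE wbar - z, z'⟫ = ⟪toE wbar, z'⟫ - ⟪z, z'⟫ := inner_sub_left _ _ _
    have h3 : ⟪z, z'⟫ = ⟪z', z⟫ := real_inner_comm _ _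
    linarith
  have c1' : ⟪z', z⟫ * β + p ^ 2 * α = 0 := by
    rw [e2, e1] at c1
    rw [div_add_div _ _ hα' hβ', div_eq_zero_iff] at c1
    rcases c1 with h | h
    · linarith
    · exact absurd h (mul_ne_zero hα' hβ')
  have c2' : q ^ 2 * β + ⟪z', z⟫ * α = 0 := by
    rw [e3, e4] at c2
    rw [div_add_div _ _ hα' hβ', div_eq_zero_iff] at c2
    rcases c2 with h | h
    · linarith
    · exact absurd h (mul_ne_zero hα' hβ')
  have hpq : α * p = β * q := by
    have h1 : (α * p) ^ 2 = (β * q) ^ 2 := by linear_combination α * c1' - β * c2'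
    have h2 : (0:ℝ) ≤ α * p := mul_nonneg (norm_nonneg (toE vbar)) (norm_nonneg z)
    have h3 : (0:ℝ) ≤ β * q := mul_nonneg (norm_nonneg (toE wbar)) (norm_nonneg z')
    rw [← Real.sqrt_sq h2, ← Real.sqrt_sq h3, h1]
  have hd2 : ‖z' - z‖ ^ 2 = (p + q) ^ 2 := by
    have hipval : inner ℝ z' z = -(p * q) := by
      have h : (inner ℝ z' z + p * q) * β = 0 := by linear_combination c1' - p * hpq
      rcases mul_eq_zero.1 h with h0 | h0
      · linarith
      · exact absurd h0 hβ'
    rw [norm_sub_sq_real]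
    rw [← hqdef, ← hpdef]
    linear_combination (-2 : ℝ) * hipval
  have hdiff : ‖z' - z‖ = p + q := by
    have h2 : (0:ℝ) ≤ ‖z' - z‖ := norm_nonneg _
    have h3 : (0:ℝ) ≤ p + q := add_nonneg (norm_nonneg z) (norm_nonneg z')
    rw [← Real.sqrt_sq h2, ← Real.sqrt_sq h3, hd2]
  have hzz : z' - z = (Submodule.orthogonalProjection kerA (toE u) : EuclideanSpace ℝ (Fin d)) := by
    have h1 : toE u = toE vbar - toE wbar := by
      rw [← hvw]; rfl
    rw [h1, map_sub, Submodule.coe_sub, hz, hz']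
  have hPu : ‖z' - z‖ ≤ ‖toE u‖ := by
    rw [hzz]
    have h0 : (0:ℝ) ≤ ‖toE u‖ := norm_nonneg _
    calc ‖(Submodule.orthogonalProjection kerA (toE u) : EuclideanSpace ℝ (Fin d))‖
        = ‖Submodule.orthogonalProjection kerA (toE u)‖ := Submodule.norm_coe _
      _ ≤ ‖Submodule.orthogonalProjection kerA‖ * ‖toE u‖ := (Submodule.orthogonalProjection kerA).le_opNorm _
      _ ≤ 1 * ‖toE u‖ := mul_le_mul_of_nonneg_right (Submodule.orthogonalProjection_norm_le kerA) h0
      _ = ‖toE u‖ := one_mul _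
  have hpq_le : p + q ≤ ‖toE u‖ := by rw [← hdiff]; exact hPu
  -- disjoint supports
  have hAx : ∀ (x : Fin d → ℝ) (i : {i // i ∈ J}), (A *ᵥ x) i = Xt.mulVec x i.1 := by
    intro x i
    simp [hA, Matrix.mulVec, dotProduct, Matrix.submatrix_apply]
  have hmemJ : ∀ i : {i // i ∈ J}, Xt.mulVec vbar i.1 = 0 ∨ Xt.mulVec wbar i.1 = 0 := by
    intro i
    have hi : (i : Fin n) ∈ Finset.filter
        (fun i => (Xt *ᵥ vbar) i = 0 ∨ (Xt *ᵥ wbar) i = 0) Finset.univ := i.2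
    exact (Finset.mem_filter.1 hi).2
  have hXu : ∀ i : {i // i ∈ J}, (A *ᵥ u) i = (A *ᵥ vbar) i - (A *ᵥ wbar) i := by
    intro i
    rw [← hvw, Matrix.mulVec_sub]
    rfl
  have h1A : ∀ x : Fin d → ℝ, toEuclideanLin A (toE x) = toE (A *ᵥ x) := fun _ => rfl
  have hAv : ‖toEuclideanLin A (toE vbar)‖ ≤ ‖toEuclideanLin A (toE u)‖ := by
    rw [h1A, h1A, norm_toE, norm_toE]
    apply Real.sqrt_le_sqrt
    refine Finset.sum_le_sum fun i _ => ?_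
    rcases hmemJ i with h | h
    · rw [hAx vbar i, h]
      simpa using sq_nonneg ((A *ᵥ u) i)
    · rw [hXu i, hAx wbar i, h, sub_zero]
  have hAw : ‖toEuclideanLin A (toE wbar)‖ ≤ ‖toEuclideanLin A (toE u)‖ := by
    rw [h1A, h1A, norm_toE, norm_toE]
    apply Real.sqrt_le_sqrt
    refine Finset.sum_le_sum fun i _ => ?_
    rcases hmemJ i with h | h
    · rw [hXu i, hAx vbar i, h, zero_sub, neg_sq]
    · rw [hAx wbar i, h]
      simpa using sq_nonneg ((A *ᵥ u) i)
  -- triangle inequalities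
  have tv : α ≤ ‖toE vbar - z'‖ + q := by
    have h := norm_add_le (toE vbar - z') z'
    rw [sub_add_cancel] at h
    exact h
  have tw : β ≤ ‖toE wbar - z‖ + p := by
    have h := norm_add_le (toE wbar - z) z
    rw [sub_add_cancel] at h
    exact h
  rw [hn2 vbar, hn2 wbar, hn2 u, ← hαdef, ← hβdef]
  by_cases hne : (singVals A).Nonempty
  · have hm := sInf_singVals_pos A hne
    have hbv : ‖toE vbar - z'‖ ≤ kappa A * ‖toE u‖ := by
      have h1 := norm_AL_ge A hvo
      have h2 : toEuclideanLin A (toE vbar - z') = toEuclideanLin A (toE vbar) := by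
        rw [map_sub, LinearMap.mem_ker.1 hz'_ker, sub_zero]
      rw [h2] at h1
      have h4 : sInf (singVals A) * ‖toE vbar - z'‖ ≤ sSup (singVals A) * ‖toE u‖ :=
        le_trans h1 (le_trans hAv (norm_AL_le A (toE u)))
      rw [kappa, div_mul_eq_mul_div]
      exact (le_div_iff₀ hm).2 (by rw [mul_comm]; exact h4)
    have hbw : ‖toE wbar - z‖ ≤ kappa A * ‖toE u‖ := by
      have h1 := norm_AL_ge A hwo
      have h2 : toEuclideanLin A (toE wbar - z) = toEuclideanLin A (toE wbar) := by
        rw [map_sub, LinearMap.mem_ker.1 hz_ker, sub_zero]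
      rw [h2] at h1
      have h4 : sInf (singVals A) * ‖toE wbar - z‖ ≤ sSup (singVals A) * ‖toE u‖ :=
        le_trans h1 (le_trans hAw (norm_AL_le A (toE u)))
      rw [kappa, div_mul_eq_mul_div]
      exact (le_div_iff₀ hm).2 (by rw [mul_comm]; exact h4)
    have hexp : (1 + 2 * kappa A) * ‖toE u‖ = ‖toE u‖ + 2 * (kappa A * ‖toE u‖) := by ring
    rw [hexp]
    linarith [tv, tw, hbv, hbw, hpq_le]
  · have hemp : singVals A = ∅ := Set.not_nonempty_iff_eq_empty.1 hne
    have hκ0 : kappa A = 0 := by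
      rw [kappa, hemp, Real.sSup_empty, zero_div]
    have hvker : toE vbar ∈ kerA := LinearMap.mem_ker.2 (AL_zero_of_empty A hemp _)
    have hwker : toE wbar ∈ kerA := LinearMap.mem_ker.2 (AL_zero_of_empty A hemp _)
    have hz'v : z' = toE vbar := by
      rw [hz']
      exact Submodule.starProjection_eq_self_iff.2 hvker
    have hzw : z = toE wbar := by
      rw [hz]
      exact Submodule.starProjection_eq_self_iff.2 hwker
    have hq : q = α := by rw [hqdef, hz'v]
    have hp : p = β := by rw [hpdef, hzw]
    rw [hκ0]
    rw [hq, hp] at hpq_le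
    linarith

end Main
end

section
/- Let L : R^n -> R be convex and X in R^{n x d}. The weight-decay regularized problem min over (W_1 in R^{m x d}, w_2 in R^m) of L(sum_i D_i X W_{1i} w_{2i}) + (lambda/2) sum_i (||W_{1i}||_2^2 + w_{2i}^2), where D_1,...,D_m are fixed diagonal 0/1 matrices, has the same optimal value as the group-lasso problem min over u = (u_1,...,u_m), u_i in R^d, of L(sum_i D_i X u_i) + lambda sum_i ||u_i||_2. -/
/-!
By AM-GM, `2 ‖c • v‖ ≤ ‖v‖² + c²`, so replacing each neuron `(W₁ᵢ, w₂ᵢ)` by `uᵢ = w₂ᵢ • W₁ᵢ`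
keeps the network output and does not increase the objective. Conversely the balanced
factorization `W₁ᵢ = uᵢ / √‖uᵢ‖`, `w₂ᵢ = √‖uᵢ‖` attains equality, so every group-lasso value is
a weight-decay value. Hence both sets of values have the same lower bounds.
-/

open Matrix

lemma norm2_eq_norm_toLp {k : ℕ} (v : Fin k → ℝ) :
    norm2 v = ‖(WithLp.toLp 2 v : EuclideanSpace ℝ (Fin k))‖ := by
  simp [norm2, EuclideanSpace.norm_eq]

/-- Two sets of reals with the same lower bounds have the same infimum, junk value `0`
included. -/
lemma Real.sInf_eq_of_subset_of_forall_exists_le {A B : Set ℝ} (hBA : B ⊆ A)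
    (hAB : ∀ a ∈ A, ∃ b ∈ B, b ≤ a) : sInf A = sInf B := by
  rcases B.eq_empty_or_nonempty with rfl | hB
  · have hA : A = ∅ := Set.eq_empty_of_forall_notMem fun a ha => by simpa using hAB a ha
    rw [hA]
  by_cases hbdd : BddBelow B
  · have hbddA : BddBelow A := by
      obtain ⟨x, hx⟩ := hbdd
      refine ⟨x, fun a ha => ?_⟩
      obtain ⟨b, hb, hba⟩ := hAB a ha
      exact (hx hb).trans hba
    refine le_antisymm (csInf_le_csInf hbddA hB hBA) (le_csInf (hB.mono hBA) fun a ha => ?_)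
    obtain ⟨b, hb, hba⟩ := hAB a ha
    exact (csInf_le hbdd hb).trans hba
  · rw [Real.sInf_of_not_bddBelow hbdd, Real.sInf_of_not_bddBelow fun h => hbdd (h.mono hBA)]

lemma mul_mulVec_mul_eq_mul_mulVec_smul {ι κ R : Type*} [Fintype κ] [CommRing R]
    (X : Matrix ι κ R) (a c : R) (w : κ → R) (k : ι) :
    a * X.mulVec w k * c = a * X.mulVec (c • w) k := by
  rw [mulVec_smul, Pi.smul_apply, smul_eq_mul]
  ring

section BalancedFactorization

variable {E : Type*} [NormedAddCommGroup E] [NormedSpace ℝ E]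

lemma two_mul_norm_smul_le_norm_sq_add_sq (c : ℝ) (v : E) :
    2 * ‖c • v‖ ≤ ‖v‖ ^ 2 + c ^ 2 := by
  rw [norm_smul, Real.norm_eq_abs, ← sq_abs c]
  nlinarith [two_mul_le_add_sq ‖v‖ |c|]

lemma sqrt_norm_smul_inv_sqrt_norm_smul (u : E) : √‖u‖ • (√‖u‖)⁻¹ • u = u := by
  rcases eq_or_ne u 0 with rfl | hu
  · simp
  · exact smul_inv_smul₀ (Real.sqrt_ne_zero'.2 (norm_pos_iff.2 hu)) u

/-- The balanced factorization `u = √‖u‖ • ((√‖u‖)⁻¹ • u)` attains equality in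
`two_mul_norm_smul_le_norm_sq_add_sq`. -/
lemma norm_inv_sqrt_norm_smul_sq_add_sq (u : E) :
    ‖(√‖u‖)⁻¹ • u‖ ^ 2 + √‖u‖ ^ 2 = 2 * ‖u‖ := by
  rw [norm_smul, norm_inv, Real.norm_of_nonneg (Real.sqrt_nonneg _), mul_pow, inv_pow,
    Real.sq_sqrt (norm_nonneg _)]
  rcases eq_or_ne ‖u‖ 0 with h | h
  · simp [h]
  · field_simp
    ring

end BalancedFactorization

theorem weight_decay_eq_group_lasso_general {n d m : ℕ}
    (L : (Fin n → ℝ) → ℝ)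
    (X : Matrix (Fin n) (Fin d) ℝ) (lam : ℝ) (hlam : 0 ≤ lam)
    (D : Fin m → Fin n → ℝ) :
    sInf {c : ℝ | ∃ (W1 : Fin m → Fin d → ℝ) (w2 : Fin m → ℝ),
        c = L (∑ i, fun k => D i k * X.mulVec (W1 i) k * w2 i)
          + lam / 2 * ∑ i, (norm2 (W1 i) ^ 2 + w2 i ^ 2)} =
    sInf {c : ℝ | ∃ u : Fin m → Fin d → ℝ,
        c = L (∑ i, fun k => D i k * X.mulVec (u i) k) + lam * ∑ i, norm2 (u i)} := by
  simp only [mul_mulVec_mul_eq_mul_mulVec_smul, norm2_eq_norm_toLp]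
  refine Real.sInf_eq_of_subset_of_forall_exists_le ?_ ?_
  · rintro _ ⟨u, rfl⟩
    set s : Fin m → ℝ := fun i => √‖(WithLp.toLp 2 (u i) : EuclideanSpace ℝ (Fin d))‖
    have hsu : ∀ i, s i • (s i)⁻¹ • u i = u i := fun i => WithLp.toLp_injective 2 <| by
      simpa only [WithLp.toLp_smul] using sqrt_norm_smul_inv_sqrt_norm_smul (WithLp.toLp 2 (u i))
    refine ⟨fun i => (s i)⁻¹ • u i, s, ?_⟩
    simp only [hsu, s, WithLp.toLp_smul, norm_inv_sqrt_norm_smul_sq_add_sq, ← Finset.mul_sum]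
    ring
  · rintro _ ⟨W1, w2, rfl⟩
    refine ⟨_, ⟨fun i => w2 i • W1 i, rfl⟩, ?_⟩
    rw [div_mul_eq_mul_div, mul_div_assoc, Finset.sum_div]
    gcongr with i
    rw [le_div_iff₀ two_pos, mul_comm, WithLp.toLp_smul]
    exact two_mul_norm_smul_le_norm_sq_add_sq (w2 i) (WithLp.toLp 2 (W1 i))

/-- The weight-decay regularized two-layer (gated) problem has the same optimal value
as the group-lasso problem. -/
theorem weight_decay_eq_group_lasso {n d m : ℕ}
    (L : (Fin n → ℝ) → ℝ) (hL : ConvexOn ℝ Set.univ L)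
    (X : Matrix (Fin n) (Fin d) ℝ) (lam : ℝ) (hlam : 0 ≤ lam)
    (D : Fin m → Fin n → ℝ) (hD : ∀ i k, D i k = 0 ∨ D i k = 1) :
    sInf {c : ℝ | ∃ (W1 : Fin m → Fin d → ℝ) (w2 : Fin m → ℝ),
        c = L (∑ i, fun k => D i k * X.mulVec (W1 i) k * w2 i)
          + lam / 2 * ∑ i, (norm2 (W1 i) ^ 2 + w2 i ^ 2)} =
    sInf {c : ℝ | ∃ u : Fin m → Fin d → ℝ,
        c = L (∑ i, fun k => D i k * X.mulVec (u i) k) + lam * ∑ i, norm2 (u i)} :=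
  weight_decay_eq_group_lasso_general L X lam hlam D
end

section
/- Let f be convex and L-smooth on R^p with minimizer set nonempty, and g convex, proper, closed. FISTA applied to F = f + g with step size 1/L produces iterates u_k satisfying F(u_k) - F* <= 2L ||u_0 - u*||_2^2 / (k+1)^2; consequently, to reach an epsilon-optimal point it suffices to take k >= sqrt(2 L ||u_0 - u*||_2^2 / epsilon). -/
open scoped RealInnerProductSpace

private lemma fista_line_deriv {E : Type*} [NormedAddCommGroup E] [InnerProductSpace ℝ E] [CompleteSpace E]
    {f : E → ℝ} {v : E} (a d : E) (s : ℝ) (h : HasGradientAt f v (a + s • d)) :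
    HasDerivAt (fun r : ℝ => f (a + r • d)) (⟪v, d⟫) s := by
  have hline : HasDerivAt (fun r : ℝ => a + r • d) d s := by
    simpa using ((hasDerivAt_id s).smul_const d).const_add a
  have := h.hasFDerivAt.comp_hasDerivAt s hline
  simp only [InnerProductSpace.toDual_apply_apply] at this
  exact this

private lemma fista_descent {E : Type*} [NormedAddCommGroup E] [InnerProductSpace ℝ E] [CompleteSpace E]
    (f : E → ℝ) (f' : E → E) (L : ℝ) (hL : 0 < L)
    (hgrad : ∀ x, HasGradientAt f (f' x) x)
    (hlip : ∀ x y, ‖f' x - f' y‖ ≤ L * ‖x - y‖) (a x : E) :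
    f x ≤ f a + ⟪f' a, x - a⟫ + L / 2 * ‖x - a‖ ^ 2 := by
  set d := x - a with hd
  set φ : ℝ → ℝ := fun s => f (a + s • d) - s * ⟪f' a, d⟫ - L * ‖d‖ ^ 2 / 2 * s ^ 2 with hφdef
  have hφ : ∀ s : ℝ, HasDerivAt φ (⟪f' (a + s • d), d⟫ - ⟪f' a, d⟫ - L * ‖d‖ ^ 2 * s) s := by
    intro s
    have h1 := fista_line_deriv a d s (hgrad _)
    have h2 : HasDerivAt (fun s : ℝ => s * ⟪f' a, d⟫) (⟪f' a, d⟫) s := by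
      simpa using (hasDerivAt_id s).mul_const (⟪f' a, d⟫)
    have h3 : HasDerivAt (fun s : ℝ => L * ‖d‖ ^ 2 / 2 * s ^ 2) (L * ‖d‖ ^ 2 * s) s := by
      have := (hasDerivAt_pow 2 s).const_mul (L * ‖d‖ ^ 2 / 2)
      exact this.congr_deriv (by norm_num; ring)
    exact (h1.sub h2).sub h3
  have mono : AntitoneOn φ (Set.Icc (0 : ℝ) 1) := by
    apply antitoneOn_of_deriv_nonpos (convex_Icc 0 1)
    · exact fun s _ => (hφ s).continuousAt.continuousWithinAt
    · exact fun s _ => (hφ s).differentiableAt.differentiableWithinAt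
    · intro s hs
      rw [interior_Icc] at hs
      rw [(hφ s).deriv]
      have hs0 : 0 < s := hs.1
      have h1 : ⟪f' (a + s • d), d⟫ - ⟪f' a, d⟫ = ⟪f' (a + s • d) - f' a, d⟫ := by
        rw [inner_sub_left]
      have h2 : ⟪f' (a + s • d) - f' a, d⟫ ≤ L * ‖d‖ ^ 2 * s := by
        calc ⟪f' (a + s • d) - f' a, d⟫ ≤ ‖f' (a + s • d) - f' a‖ * ‖d‖ :=
              real_inner_le_norm _ _
          _ ≤ (L * ‖a + s • d - a‖) * ‖d‖ :=
              mul_le_mul_of_nonneg_right (hlip _ _) (norm_nonneg d)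
          _ = L * ‖d‖ ^ 2 * s := by
              rw [add_sub_cancel_left, norm_smul, Real.norm_eq_abs, abs_of_pos hs0]
              ring
      linarith
  have h01 := mono (Set.left_mem_Icc.2 zero_le_one) (Set.right_mem_Icc.2 zero_le_one) zero_le_one
  have e0 : φ 0 = f a := by simp [hφdef]
  have e1 : φ 1 = f x - ⟪f' a, d⟫ - L * ‖d‖ ^ 2 / 2 := by
    simp [hφdef, hd]
  rw [e0, e1] at h01
  have : L * ‖d‖ ^ 2 / 2 = L / 2 * ‖x - a‖ ^ 2 := by rw [hd]; ring
  linarith [this ▸ h01]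

private lemma fista_grad_ineq {E : Type*} [NormedAddCommGroup E] [InnerProductSpace ℝ E] [CompleteSpace E]
    (f : E → ℝ) (f' : E → E) (hf : ConvexOn ℝ Set.univ f)
    (hgrad : ∀ x, HasGradientAt f (f' x) x) (a x : E) :
    f a + ⟪f' a, x - a⟫ ≤ f x := by
  set ψ : ℝ → ℝ := fun s => f (a + s • (x - a)) with hψdef
  have hψconv : ConvexOn ℝ Set.univ ψ := by
    have h := hf.comp_affineMap (AffineMap.lineMap a x : ℝ →ᵃ[ℝ] E)
    have he : (f ∘ (AffineMap.lineMap a x : ℝ →ᵃ[ℝ] E)) = ψ := by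
      funext s
      simp [hψdef, AffineMap.lineMap_apply, add_comm]
    rw [he, Set.preimage_univ] at h
    exact h
  have hd : HasDerivAt ψ (⟪f' a, x - a⟫) 0 := by
    exact fista_line_deriv a (x - a) 0 (by simpa using hgrad a)
  have := hψconv.le_slope_of_hasDerivAt (Set.mem_univ (0 : ℝ)) (Set.mem_univ (1 : ℝ)) one_pos hd
  rw [slope_def_field] at this
  have e0 : ψ 0 = f a := by simp [hψdef]
  have e1 : ψ 1 = f x := by simp [hψdef]
  rw [e0, e1] at this
  have h10 : (1 : ℝ) - 0 = 1 := by norm_num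
  rw [h10, div_one] at this
  linarith

private lemma fista_prox_ineq {E : Type*} [NormedAddCommGroup E] [InnerProductSpace ℝ E]
    (g : E → ℝ) (hg : ConvexOn ℝ Set.univ g) (L : ℝ) (hL : 0 < L) (v u1 : E)
    (hprox : ∀ z, g u1 + L / 2 * ‖u1 - v‖ ^ 2 ≤ g z + L / 2 * ‖z - v‖ ^ 2) (z : E) :
    g u1 ≤ g z + L * ⟪u1 - v, z - u1⟫ := by
  apply le_of_forall_pos_le_add
  intro ε hε
  set B : ℝ := ‖z - u1‖ ^ 2 with hB
  have hBnn : 0 ≤ B := by positivity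
  set I : ℝ := ⟪u1 - v, z - u1⟫ with hI
  have hden : 0 < L * (B + 1) := by positivity
  set θ : ℝ := min 1 (2 * ε / (L * (B + 1))) with hθdef
  have hθpos : 0 < θ := lt_min one_pos (by positivity)
  have hθ1 : θ ≤ 1 := min_le_left _ _
  have hgc : g ((1 - θ) • u1 + θ • z) ≤ (1 - θ) * g u1 + θ * g z := by
    have := hg.2 (Set.mem_univ u1) (Set.mem_univ z) (by linarith : (0:ℝ) ≤ 1 - θ)
      hθpos.le (by ring)
    simpa [smul_eq_mul] using this
  have hcomb : u1 + θ • (z - u1) = (1 - θ) • u1 + θ • z := by module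
  have hp := hprox (u1 + θ • (z - u1))
  have hexp : ‖u1 + θ • (z - u1) - v‖ ^ 2 = ‖u1 - v‖ ^ 2 + 2 * (θ * I) + θ ^ 2 * B := by
    have hv : u1 + θ • (z - u1) - v = (u1 - v) + θ • (z - u1) := by module
    rw [hv, norm_add_sq_real, real_inner_smul_right, norm_smul, Real.norm_eq_abs,
      mul_pow, sq_abs]
  rw [hexp, hcomb] at hp
  have h4 : θ * g u1 ≤ θ * (g z + L * I + L * θ / 2 * B) := by nlinarith [hp, hgc]
  have h5 : g u1 ≤ g z + L * I + L * θ / 2 * B := (mul_le_mul_iff_right₀ hθpos).mp h4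
  have hθle : θ ≤ 2 * ε / (L * (B + 1)) := min_le_right _ _
  have h7 : θ * (L * (B + 1)) ≤ 2 * ε := by
    calc θ * (L * (B + 1)) ≤ (2 * ε / (L * (B + 1))) * (L * (B + 1)) :=
          mul_le_mul_of_nonneg_right hθle hden.le
      _ = 2 * ε := div_mul_cancel₀ _ hden.ne'
  have h6 : L * θ / 2 * B ≤ ε := by nlinarith [mul_nonneg hθpos.le hL.le]
  linarith

private lemma fista_key {E : Type*} [NormedAddCommGroup E] [InnerProductSpace ℝ E]
    [CompleteSpace E]
    (f g : E → ℝ) (f' : E → E) (L : ℝ) (hL : 0 < L)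
    (hf : ConvexOn ℝ Set.univ f)
    (hgrad : ∀ x, HasGradientAt f (f' x) x)
    (hlip : ∀ x y, ‖f' x - f' y‖ ≤ L * ‖x - y‖)
    (hg : ConvexOn ℝ Set.univ g) (yk u1 : E)
    (hprox : ∀ z, g u1 + L / 2 * ‖u1 - (yk - L⁻¹ • f' yk)‖ ^ 2 ≤
        g z + L / 2 * ‖z - (yk - L⁻¹ • f' yk)‖ ^ 2) (z : E) :
    f u1 + g u1 + L / 2 * ‖u1 - yk‖ ^ 2 + L * ⟪u1 - yk, yk - z⟫ ≤ f z + g z := by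
  set v : E := yk - L⁻¹ • f' yk with hv
  have hfd := fista_descent f f' L hL hgrad hlip yk u1
  have hfc := fista_grad_ineq f f' hf hgrad yk z
  have hgx := fista_prox_ineq g hg L hL v u1 hprox z
  have e1 : u1 - v = (u1 - yk) + L⁻¹ • f' yk := by rw [hv]; module
  have i1 : ⟪u1 - v, z - u1⟫ = ⟪u1 - yk, z - u1⟫ + L⁻¹ * ⟪f' yk, z - u1⟫ := by
    rw [e1, inner_add_left, real_inner_smul_left]
  have hgx' : g u1 ≤ g z + L * ⟪u1 - yk, z - u1⟫ + ⟪f' yk, z - u1⟫ := by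
    rw [i1] at hgx
    have : L * (⟪u1 - yk, z - u1⟫ + L⁻¹ * ⟪f' yk, z - u1⟫) =
        L * ⟪u1 - yk, z - u1⟫ + ⟪f' yk, z - u1⟫ := by
      rw [mul_add, ← mul_assoc, mul_inv_cancel₀ hL.ne', one_mul]
    linarith [hgx, this]
  have i2 : ⟪f' yk, u1 - yk⟫ + ⟪f' yk, z - u1⟫ = ⟪f' yk, z - yk⟫ := by
    rw [← inner_add_right]
    congr 1
    abel
  have i3 : ⟪u1 - yk, z - u1⟫ = -⟪u1 - yk, yk - z⟫ - ‖u1 - yk‖ ^ 2 := by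
    have hz : z - u1 = -(yk - z) - (u1 - yk) := by abel
    rw [hz, inner_sub_right, inner_neg_right, real_inner_self_eq_norm_sq]
  have i3' : L * ⟪u1 - yk, z - u1⟫ = -(L * ⟪u1 - yk, yk - z⟫) - L * ‖u1 - yk‖ ^ 2 := by
    rw [i3]; ring
  linarith [hfd, hfc, hgx', i2, i3']
set_option maxHeartbeats 1000000 in
/-- FISTA convergence: for `F = f + g` with `f` convex `L`-smooth and `g` proper closed
convex, FISTA with step size `1/L` satisfies
`F(u_k) - F* ≤ 2L ‖u₀ - u*‖² / (k+1)²`; consequently `k ≥ √(2L‖u₀ - u*‖²/ε)` iterations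
suffice for an `ε`-optimal point. -/
theorem fista_convergence {p : ℕ}
    (f g : EuclideanSpace ℝ (Fin p) → ℝ)
    (f' : EuclideanSpace ℝ (Fin p) → EuclideanSpace ℝ (Fin p))
    (L : ℝ) (hLpos : 0 < L)
    (hf : ConvexOn ℝ Set.univ f)
    (hgrad : ∀ x, HasGradientAt f (f' x) x)
    (hlip : ∀ x y, ‖f' x - f' y‖ ≤ L * ‖x - y‖)
    (hg : ConvexOn ℝ Set.univ g) (hgclosed : LowerSemicontinuous g)
    (ustar : EuclideanSpace ℝ (Fin p))
    (hstar : ∀ z, f ustar + g ustar ≤ f z + g z)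
    (u y : ℕ → EuclideanSpace ℝ (Fin p)) (t : ℕ → ℝ)
    (ht0 : t 0 = 1)
    (hts : ∀ k, t (k + 1) = (1 + Real.sqrt (1 + 4 * t k ^ 2)) / 2)
    (hy0 : y 0 = u 0)
    (hprox : ∀ k, ∀ z,
      g (u (k + 1)) + L / 2 * ‖u (k + 1) - (y k - L⁻¹ • f' (y k))‖ ^ 2 ≤
        g z + L / 2 * ‖z - (y k - L⁻¹ • f' (y k))‖ ^ 2)
    (hmom : ∀ k, y (k + 1) = u (k + 1) + ((t k - 1) / t (k + 1)) • (u (k + 1) - u k)) :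
    (∀ k : ℕ, 1 ≤ k →
      f (u k) + g (u k) - (f ustar + g ustar) ≤
        2 * L * ‖u 0 - ustar‖ ^ 2 / ((k : ℝ) + 1) ^ 2) ∧
    (∀ ε : ℝ, 0 < ε → ∀ k : ℕ,
      Real.sqrt (2 * L * ‖u 0 - ustar‖ ^ 2 / ε) ≤ (k : ℝ) →
      f (u k) + g (u k) - (f ustar + g ustar) ≤ ε) := by
  have hLne : L ≠ 0 := hLpos.ne'
  -- facts about t
  have htlow : ∀ k : ℕ, ((k : ℝ) + 2) / 2 ≤ t k := by
    intro k
    induction k with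
    | zero => rw [ht0]; norm_num
    | succ n ih =>
      have htn : 0 ≤ t n := by
        have : (0:ℝ) ≤ ((n:ℝ)+2)/2 := by positivity
        linarith
      have hsq : 2 * t n ≤ Real.sqrt (1 + 4 * t n ^ 2) := by
        rw [show 2 * t n = Real.sqrt ((2 * t n) ^ 2) from (Real.sqrt_sq (by positivity)).symm]
        apply Real.sqrt_le_sqrt
        nlinarith
      rw [hts n]
      push_cast
      linarith
  have ht1 : ∀ k, 1 ≤ t k := by
    intro k
    have h := htlow k
    have h2 : (0:ℝ) ≤ (k:ℝ) := Nat.cast_nonneg k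
    linarith
  have htrel : ∀ k, t (k+1) ^ 2 - t (k+1) = t k ^ 2 := by
    intro k
    have h0 : (0:ℝ) ≤ 1 + 4 * t k ^ 2 := by positivity
    have hs : Real.sqrt (1 + 4 * t k ^ 2) ^ 2 = 1 + 4 * t k ^ 2 := Real.sq_sqrt h0
    rw [hts k]
    linear_combination hs / 4
  have key : ∀ (k : ℕ) (z : EuclideanSpace ℝ (Fin p)),
      f (u (k+1)) + g (u (k+1)) + L / 2 * ‖u (k+1) - y k‖ ^ 2
        + L * (inner ℝ (u (k+1) - y k) (y k - z) : ℝ) ≤ f z + g z :=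
    fun k z => fista_key f g f' L hLpos hf hgrad hlip hg (y k) (u (k+1)) (hprox k) z
  set v : ℕ → ℝ := fun k => f (u k) + g (u k) - (f ustar + g ustar) with hvdef
  have hvnn : ∀ k, 0 ≤ v k := by
    intro k; simp only [hvdef]; linarith [hstar (u k)]
  set W : ℕ → EuclideanSpace ℝ (Fin p) :=
    fun j => t j • u (j+1) - (t j - 1) • u j - ustar with hWdef
  -- base case
  have base : 2 / L * (t 0 ^ 2 * v 1) + ‖W 0‖ ^ 2 ≤ ‖u 0 - ustar‖ ^ 2 := by
    have hsq : ‖u 1 - ustar‖ ^ 2 = ‖u 1 - y 0‖ ^ 2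
        + 2 * (inner ℝ (u 1 - y 0) (y 0 - ustar) : ℝ) + ‖y 0 - ustar‖ ^ 2 := by
      have h : u 1 - ustar = (u 1 - y 0) + (y 0 - ustar) := by abel
      rw [h, norm_add_sq_real]
    have hW0 : W 0 = u 1 - ustar := by
      simp only [hWdef, ht0]
      module
    have hK0 : f (u 1) + g (u 1) + L/2*‖u 1 - y 0‖^2
        + L*(inner ℝ (u 1 - y 0) (y 0 - ustar) : ℝ) ≤ f ustar + g ustar := key 0 ustar
    have hK : v 1 + L/2*‖u 1 - y 0‖^2 + L*(inner ℝ (u 1 - y 0) (y 0 - ustar) : ℝ) ≤ 0 := by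
      simp only [hvdef]
      linarith [hK0]
    have hmul := mul_le_mul_of_nonneg_left hK (by positivity : (0:ℝ) ≤ 2 / L)
    have hexp : 2/L * (v 1 + L/2*‖u 1 - y 0‖^2 + L*(inner ℝ (u 1 - y 0) (y 0 - ustar) : ℝ))
        = 2/L * v 1 + ‖u 1 - y 0‖^2 + 2*(inner ℝ (u 1 - y 0) (y 0 - ustar) : ℝ) := by
      field_simp
    rw [hexp, mul_zero] at hmul
    rw [hW0, ht0, ← hy0]
    linarith [hsq, hmul]
  -- inductive step
  have step : ∀ j : ℕ, 2 / L * (t (j+1) ^ 2 * v (j+2)) + ‖W (j+1)‖ ^ 2 ≤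
      2 / L * (t j ^ 2 * v (j+1)) + ‖W j‖ ^ 2 := by
    intro j
    have hT1 : 1 ≤ t (j+1) := ht1 (j+1)
    have hTne : t (j+1) ≠ 0 := by linarith
    set D : ℝ := ‖u (j+2) - y (j+1)‖^2 with hD
    set I1 : ℝ := (inner ℝ (u (j+2) - y (j+1)) (y (j+1) - u (j+1)) : ℝ) with hI1
    set I2 : ℝ := (inner ℝ (u (j+2) - y (j+1)) (y (j+1) - ustar) : ℝ) with hI2
    have K1' : f (u (j+2)) + g (u (j+2)) + L/2*D + L*I1 ≤ f (u (j+1)) + g (u (j+1)) :=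
      key (j+1) (u (j+1))
    have K2' : f (u (j+2)) + g (u (j+2)) + L/2*D + L*I2 ≤ f ustar + g ustar :=
      key (j+1) ustar
    have K1 : v (j+2) + L/2*D + L*I1 ≤ v (j+1) := by
      simp only [hvdef]
      linarith [K1']
    have K2 : v (j+2) + L/2*D + L*I2 ≤ 0 := by
      simp only [hvdef]
      linarith [K2']
    have hTy : t (j+1) • y (j+1) = t (j+1) • u (j+1) + (t j - 1) • (u (j+1) - u j) := by
      rw [hmom j, smul_add, smul_smul, mul_comm, div_mul_cancel₀ _ hTne]
    have cvec' : W j = t (j+1) • y (j+1) - (t (j+1) - 1) • u (j+1) - ustar := by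
      rw [hTy]
      simp only [hWdef]
      module
    have hic : (t (j+1) - 1) * I1 + I2 = (inner ℝ (u (j+2) - y (j+1)) (W j) : ℝ) := by
      have hvec : (t (j+1) - 1) • (y (j+1) - u (j+1)) + (y (j+1) - ustar)
          = t (j+1) • y (j+1) - (t (j+1) - 1) • u (j+1) - ustar := by module
      rw [cvec', ← hvec, inner_add_right, real_inner_smul_right, hI1, hI2]
    have Wvec : W (j+1) = t (j+1) • (u (j+2) - y (j+1)) + W j := by
      rw [cvec']
      simp only [hWdef]
      module
    have hnorm : ‖W (j+1)‖^2 = t (j+1)^2 * D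
        + 2 * (t (j+1) * (inner ℝ (u (j+2) - y (j+1)) (W j) : ℝ)) + ‖W j‖^2 := by
      rw [Wvec, norm_add_sq_real, real_inner_smul_left, norm_smul, Real.norm_eq_abs,
        mul_pow, sq_abs, hD]
    have s1 := mul_le_mul_of_nonneg_left K1 (by linarith : (0:ℝ) ≤ t (j+1) - 1)
    have s2 : (t (j+1) - 1) * (v (j+2) + L/2*D + L*I1) + (v (j+2) + L/2*D + L*I2)
        ≤ (t (j+1) - 1) * v (j+1) := by linarith [s1, K2]
    have s3 := mul_le_mul_of_nonneg_left s2 (by linarith : (0:ℝ) ≤ t (j+1))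
    have main : t (j+1)^2 * v (j+2) + L/2*‖W (j+1)‖^2 - L/2*‖W j‖^2
        ≤ (t (j+1)^2 - t (j+1)) * v (j+1) := by
      calc t (j+1)^2 * v (j+2) + L/2*‖W (j+1)‖^2 - L/2*‖W j‖^2
          = t (j+1) * ((t (j+1) - 1) * (v (j+2) + L/2*D + L*I1)
              + (v (j+2) + L/2*D + L*I2)) := by
            rw [hnorm, ← hic]; ring
        _ ≤ t (j+1) * ((t (j+1) - 1) * v (j+1)) := s3
        _ = (t (j+1)^2 - t (j+1)) * v (j+1) := by ring
    have hrel : (t (j+1)^2 - t (j+1)) * v (j+1) = t j ^2 * v (j+1) := by rw [htrel j]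
    rw [hrel] at main
    have main2 : t (j+1)^2 * v (j+2) + L/2*‖W (j+1)‖^2 ≤ t j^2 * v (j+1) + L/2*‖W j‖^2 := by
      linarith [main]
    have hmul := mul_le_mul_of_nonneg_left main2 (by positivity : (0:ℝ) ≤ 2/L)
    have e1 : 2/L * (t (j+1)^2 * v (j+2) + L/2*‖W (j+1)‖^2)
        = 2/L * (t (j+1)^2 * v (j+2)) + ‖W (j+1)‖^2 := by field_simp
    have e2 : 2/L * (t j^2 * v (j+1) + L/2*‖W j‖^2)
        = 2/L * (t j^2 * v (j+1)) + ‖W j‖^2 := by field_simp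
    linarith [hmul, e1.symm.le, e2.le]
  have Abound : ∀ j : ℕ, 2/L * (t j^2 * v (j+1)) + ‖W j‖^2 ≤ ‖u 0 - ustar‖^2 := by
    intro j
    induction j with
    | zero => exact base
    | succ n ih => exact le_trans (step n) ih
  have part1 : ∀ k : ℕ, 1 ≤ k → f (u k) + g (u k) - (f ustar + g ustar) ≤
      2 * L * ‖u 0 - ustar‖ ^ 2 / ((k : ℝ) + 1) ^ 2 := by
    intro k hk
    obtain ⟨j, rfl⟩ : ∃ j, k = j + 1 := ⟨k - 1, (Nat.succ_pred_eq_of_pos hk).symm⟩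
    have hb := Abound j
    have hWnn : 0 ≤ ‖W j‖^2 := by positivity
    have h1 : 2/L * (t j^2 * v (j+1)) ≤ ‖u 0 - ustar‖^2 := by linarith
    have h2 : 2 * (t j^2 * v (j+1)) ≤ ‖u 0 - ustar‖^2 * L := by
      rw [div_mul_eq_mul_div, div_le_iff₀ hLpos] at h1
      linarith
    have htj := htlow j
    have hjnn : (0:ℝ) ≤ (j:ℝ) := Nat.cast_nonneg j
    have hv1 := hvnn (j+1)
    have hsq : ((j:ℝ)+1+1)^2 ≤ 4 * t j^2 := by
      have h0 : (0:ℝ) ≤ ((j:ℝ)+2)/2 := by positivity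
      have h1 : (((j:ℝ)+2)/2)^2 ≤ t j^2 := pow_le_pow_left₀ h0 htj 2
      nlinarith [h1]
    have hgoal : v (j+1) ≤ 2*L*‖u 0 - ustar‖^2/((j:ℝ)+1+1)^2 := by
      rw [le_div_iff₀ (by positivity)]
      have h3 : v (j+1) * ((j:ℝ)+1+1)^2 ≤ v (j+1) * (4 * t j^2) :=
        mul_le_mul_of_nonneg_left hsq hv1
      nlinarith [h3, h2]
    simp only [hvdef] at hgoal
    push_cast
    exact hgoal
  refine ⟨part1, ?_⟩
  intro ε hε k hk
  rcases Nat.eq_zero_or_pos k with hk0 | hk1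
  · subst hk0
    simp only [Nat.cast_zero] at hk
    have h0 : Real.sqrt (2*L*‖u 0 - ustar‖^2/ε) = 0 :=
      le_antisymm hk (Real.sqrt_nonneg _)
    have h1 : 2*L*‖u 0 - ustar‖^2 ≤ 0 := by
      by_contra h
      push_neg at h
      have := Real.sqrt_pos.mpr (div_pos h hε)
      linarith
    have hN : ‖u 0 - ustar‖^2 = 0 :=
      le_antisymm (by nlinarith) (by positivity)
    have h3 : u 0 = ustar := by
      have h4 : ‖u 0 - ustar‖ = 0 := by
        nlinarith [norm_nonneg (u 0 - ustar)]
      rw [norm_sub_eq_zero_iff] at h4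
      exact h4
    rw [h3]
    simpa using hε.le
  · have hp := part1 k hk1
    have harg : 0 ≤ 2*L*‖u 0 - ustar‖^2/ε := by positivity
    have hsq : 2*L*‖u 0 - ustar‖^2/ε ≤ (k:ℝ)^2 := by
      calc 2*L*‖u 0 - ustar‖^2/ε
          = (Real.sqrt (2*L*‖u 0 - ustar‖^2/ε))^2 := (Real.sq_sqrt harg).symm
        _ ≤ (k:ℝ)^2 := pow_le_pow_left₀ (Real.sqrt_nonneg _) hk 2
    have h4 : 2*L*‖u 0 - ustar‖^2 ≤ ε*(k:ℝ)^2 := by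
      rw [div_le_iff₀ hε] at hsq
      linarith
    have h5 : 2*L*‖u 0 - ustar‖^2/((k:ℝ)+1)^2 ≤ ε := by
      rw [div_le_iff₀ (by positivity)]
      have hk1' : (1:ℝ) ≤ (k:ℝ) := by exact_mod_cast hk1
      nlinarith [h4, hε.le]
    linarith [hp, h5]
end

section
/- Let d : R^m -> R ∪ {-inf} be concave, proper, upper semicontinuous with a maximizer z*. The proximal point iterations z_{k+1} = argmax_z { d(z) - (1/(2 delta)) ||z - z_k||_2^2 } with delta > 0 satisfy d(z*) - d(z_k) <= ||z* - z_0||_2^2 / (delta k) for all k >= 1. -/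
open RealInnerProductSpace

/-- Norm identity for convex combinations in a real inner product space. -/
lemma combo_norm_sq {E : Type*} [NormedAddCommGroup E] [InnerProductSpace ℝ E]
    (u v : E) (t : ℝ) :
    ‖t • u + (1 - t) • v‖ ^ 2
      = t * ‖u‖ ^ 2 + (1 - t) * ‖v‖ ^ 2 - t * (1 - t) * ‖u - v‖ ^ 2 := by
  rw [norm_add_sq_real, norm_smul, norm_smul, real_inner_smul_left, real_inner_smul_right,
    norm_sub_sq_real, mul_pow, mul_pow, Real.norm_eq_abs, Real.norm_eq_abs, sq_abs, sq_abs]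
  ring

/-- Güler's `O(1/k)` rate for the exact proximal point method on a concave, proper, upper
semicontinuous function `d` with maximizer `z*`:
`d(z*) - d(z_k) ≤ ‖z* - z₀‖² / (δ k)` for all `k ≥ 1`. -/
theorem proximal_point_rate {m : ℕ}
    (d : EuclideanSpace ℝ (Fin m) → ℝ)
    (hconc : ConcaveOn ℝ Set.univ d) (husc : UpperSemicontinuous d)
    (zstar : EuclideanSpace ℝ (Fin m)) (hstar : ∀ z, d z ≤ d zstar)
    (δ : ℝ) (hδ : 0 < δ)
    (z : ℕ → EuclideanSpace ℝ (Fin m))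
    (hiter : ∀ k, ∀ w,
      d w - 1 / (2 * δ) * ‖w - z k‖ ^ 2 ≤
        d (z (k + 1)) - 1 / (2 * δ) * ‖z (k + 1) - z k‖ ^ 2) :
    ∀ k : ℕ, 1 ≤ k → d zstar - d (z k) ≤ ‖zstar - z 0‖ ^ 2 / (δ * k) := by
  set c : ℝ := 1 / (2 * δ) with hc_def
  have hc : 0 < c := by positivity
  -- step inequality for λ < 1
  have step : ∀ k, ∀ w : EuclideanSpace ℝ (Fin m), ∀ lam : ℝ, 0 ≤ lam → lam < 1 →
      d w - c * ‖w - z k‖ ^ 2 + c * lam * ‖z (k+1) - w‖ ^ 2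
        ≤ d (z (k+1)) - c * ‖z (k+1) - z k‖ ^ 2 := by
    intro k w lam hl0 hl1
    set a := z k
    set b := z (k+1)
    have h1l : 0 < 1 - lam := by linarith
    set w' : EuclideanSpace ℝ (Fin m) := lam • b + (1 - lam) • w with hw'
    have hcc : lam • d b + (1 - lam) • d w ≤ d w' :=
      hconc.2 (Set.mem_univ b) (Set.mem_univ w) hl0 (le_of_lt h1l) (by ring)
    have hit := hiter k w'
    have hrw : w' - a = lam • (b - a) + (1 - lam) • (w - a) := by
      simp only [hw']
      module
    have hn : ‖w' - a‖ ^ 2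
        = lam * ‖b - a‖ ^ 2 + (1 - lam) * ‖w - a‖ ^ 2 - lam * (1 - lam) * ‖b - w‖ ^ 2 := by
      rw [hrw, combo_norm_sq]
      congr 2
      abel
    rw [hn] at hit
    simp only [smul_eq_mul] at hcc
    rw [← mul_le_mul_iff_right₀ h1l]
    have hbw : ‖b - w‖ = ‖z (k+1) - w‖ := rfl
    nlinarith [hit, hcc]
  -- key three-point inequality (λ → 1)
  have key : ∀ k, ∀ w : EuclideanSpace ℝ (Fin m),
      d w - c * ‖w - z k‖ ^ 2 + c * ‖z (k+1) - w‖ ^ 2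
        ≤ d (z (k+1)) - c * ‖z (k+1) - z k‖ ^ 2 := by
    intro k w
    apply le_of_forall_pos_le_add
    intro ε hε
    have hS : 0 ≤ ‖z (k+1) - w‖ ^ 2 := sq_nonneg _
    have hden : 0 < c * (‖z (k+1) - w‖ ^ 2 + 1) := by positivity
    have ht0 : 0 < min 1 (ε / (c * (‖z (k+1) - w‖ ^ 2 + 1))) := lt_min one_pos (by positivity)
    have ht1 : min 1 (ε / (c * (‖z (k+1) - w‖ ^ 2 + 1))) ≤ 1 := min_le_left _ _
    have ht2 : min 1 (ε / (c * (‖z (k+1) - w‖ ^ 2 + 1))) ≤ ε / (c * (‖z (k+1) - w‖ ^ 2 + 1)) :=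
      min_le_right _ _
    have hstep := step k w (1 - min 1 (ε / (c * (‖z (k+1) - w‖ ^ 2 + 1))))
      (by linarith) (by linarith)
    have htS : c * min 1 (ε / (c * (‖z (k+1) - w‖ ^ 2 + 1))) * ‖z (k+1) - w‖ ^ 2 ≤ ε := by
      have h1 : min 1 (ε / (c * (‖z (k+1) - w‖ ^ 2 + 1))) * (c * (‖z (k+1) - w‖ ^ 2 + 1)) ≤ ε :=
        (le_div_iff₀ hden).mp ht2
      nlinarith [mul_nonneg (mul_nonneg hc.le ht0.le) hS]
    nlinarith [hstep, htS]
  -- monotonicity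
  have mono : ∀ k, d (z k) ≤ d (z (k+1)) := by
    intro k
    have h := hiter k (z k)
    simp only [sub_self, norm_zero] at h
    nlinarith [sq_nonneg ‖z (k+1) - z k‖]
  -- telescoped bound: k * (d z* - d (z k)) ≤ c * (A 0 - A k)
  have tele : ∀ k : ℕ, (k : ℝ) * (d zstar - d (z k))
      ≤ c * (‖zstar - z 0‖ ^ 2 - ‖zstar - z k‖ ^ 2) := by
    intro k
    induction k with
    | zero => simp
    | succ n ih =>
      have hk := key n zstar
      have hrev : ‖z (n+1) - zstar‖ = ‖zstar - z (n+1)‖ := norm_sub_rev _ _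
      rw [hrev] at hk
      have hmono : d (z n) ≤ d (z (n+1)) := mono n
      have h1 : (n : ℝ) * (d zstar - d (z (n+1))) ≤ (n : ℝ) * (d zstar - d (z n)) := by
        apply mul_le_mul_of_nonneg_left (by linarith) (Nat.cast_nonneg n)
      have h2 : d zstar - d (z (n+1)) ≤ c * (‖zstar - z n‖ ^ 2 - ‖zstar - z (n+1)‖ ^ 2) := by
        nlinarith [sq_nonneg ‖z (n+1) - z n‖]
      push_cast
      nlinarith
  intro k hk
  have hk0 : (0 : ℝ) < (k : ℝ) := by exact_mod_cast hk
  have h := tele k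
  have hA : 0 ≤ ‖zstar - z k‖ ^ 2 := sq_nonneg _
  have hA0 : 0 ≤ ‖zstar - z 0‖ ^ 2 := sq_nonneg _
  rw [le_div_iff₀ (by positivity)]
  have : (k : ℝ) * (d zstar - d (z k)) ≤ c * ‖zstar - z 0‖ ^ 2 := by nlinarith
  have hdc : δ * c = 1 / 2 := by
    rw [hc_def]; field_simp
  calc (d zstar - d (z k)) * (δ * ↑k) = δ * ((k:ℝ) * (d zstar - d (z k))) := by ring
    _ ≤ δ * (c * ‖zstar - z 0‖ ^ 2) := by nlinarith
    _ = (δ * c) * ‖zstar - z 0‖ ^ 2 := by ring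
    _ = (1 / 2) * ‖zstar - z 0‖ ^ 2 := by rw [hdc]
    _ ≤ ‖zstar - z 0‖ ^ 2 := by linarith
end
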